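/- arXiv:2411.01840 — 7 statements merged into one kernel-verified Lean document; each statement's English description precedes it below -/
import Mathlib

section
/- Let A ∈ ℂⁿˣⁿ be a Hermitian matrix such that the real part Re(A) (the real matrix of real parts of the entries of A) is invertible, let Λ ⊂ ℝⁿ be any lattice, and let K ⊂ ℝⁿ be compact. Then the complex linear span of the family of functions {x ↦ exp(−(x−λ)·A(x−λ)) : λ ∈ Λ} is dense in the space C(K) of continuous complex-valued functions on K with the supremum norm. -/
/-!
For Hermitian `A` and real `u`, `u·Au = u·Bu` with `B = Re A` real symmetric, and
`exp(-(x-λ)·B(x-λ)) = exp(-λ·Bλ) · exp(-x·Bx) · exp(2λ·Bx)`. Multiplication by the unit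
`exp(-x·Bx)` is a homeomorphism of `C(K, ℂ)`, so it suffices that the exponentials `exp(2λ·Bx)`,
`λ ∈ Λ`, span a dense subspace. They form a star-closed multiplicative monoid, since `Λ` is an
additive group, and they separate points, since `B` is invertible and `Λ` spans `ℝⁿ`; so
Stone–Weierstrass applies.
-/

open Matrix

/-- A (full-rank) lattice in `ℝⁿ`: the image of `ℤⁿ` under an invertible real matrix. -/
def IsLattice (n : ℕ) (Λ : Set (Fin n → ℝ)) : Prop :=
  ∃ M : Matrix (Fin n) (Fin n) ℝ, IsUnit M ∧
    Λ = {x | ∃ k : Fin n → ℤ, x = M.mulVec fun i => (k i : ℝ)}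

namespace Matrix

variable {ι : Type*}

theorem IsHermitian.isSymm_map_re {A : Matrix ι ι ℂ} (hA : A.IsHermitian) :
    (A.map Complex.re).IsSymm :=
  IsSymm.ext fun i j => by simp [← hA.apply i j]

theorem IsHermitian.transpose_map_im {A : Matrix ι ι ℂ} (hA : A.IsHermitian) :
    (A.map Complex.im)ᵀ = -A.map Complex.im := by
  ext i j
  simp [← hA.apply i j]

variable [Fintype ι]

theorem dotProduct_mulVec_eq_dotProduct_transpose_mulVec {R : Type*} [CommSemiring R]
    (B : Matrix ι ι R) (v w : ι → R) : v ⬝ᵥ B *ᵥ w = w ⬝ᵥ Bᵀ *ᵥ v := by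
  rw [dotProduct_mulVec, dotProduct_comm, mulVec_transpose]

theorem IsSymm.sub_dotProduct_mulVec_sub {R : Type*} [CommRing R] {B : Matrix ι ι R}
    (hB : B.IsSymm) (x y : ι → R) :
    (x - y) ⬝ᵥ B *ᵥ (x - y) = x ⬝ᵥ B *ᵥ x - 2 * (y ⬝ᵥ B *ᵥ x) + y ⬝ᵥ B *ᵥ y := by
  rw [mulVec_sub, dotProduct_sub, sub_dotProduct, sub_dotProduct,
    dotProduct_mulVec_eq_dotProduct_transpose_mulVec B x y, hB.eq]
  ring

theorem dotProduct_mulVec_self_eq_zero_of_transpose_eq_neg {R : Type*} [CommRing R]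
    [NoZeroDivisors R] [CharZero R] {C : Matrix ι ι R} (hC : Cᵀ = -C) (u : ι → R) :
    u ⬝ᵥ C *ᵥ u = 0 := by
  have h := dotProduct_mulVec_eq_dotProduct_transpose_mulVec C u u
  rwa [hC, neg_mulVec, dotProduct_neg, eq_neg_iff_add_eq_zero, add_self_eq_zero] at h

theorem ofReal_dotProduct_mulVec_ofReal (A : Matrix ι ι ℂ) (u : ι → ℝ) :
    (fun i => (u i : ℂ)) ⬝ᵥ A *ᵥ (fun i => (u i : ℂ)) =
      ⟨u ⬝ᵥ A.map Complex.re *ᵥ u, u ⬝ᵥ A.map Complex.im *ᵥ u⟩ := by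
  apply Complex.ext <;> simp [dotProduct, mulVec, Complex.re_sum, Complex.im_sum]

theorem IsHermitian.ofReal_dotProduct_mulVec_ofReal {A : Matrix ι ι ℂ} (hA : A.IsHermitian)
    (u : ι → ℝ) :
    (fun i => (u i : ℂ)) ⬝ᵥ A *ᵥ (fun i => (u i : ℂ)) = ((u ⬝ᵥ A.map Complex.re *ᵥ u : ℝ) : ℂ) := by
  rw [Matrix.ofReal_dotProduct_mulVec_ofReal,
    dotProduct_mulVec_self_eq_zero_of_transpose_eq_neg hA.transpose_map_im]
  rfl

theorem exists_dotProduct_mulVec_intCast_ne_zero [DecidableEq ι] {R : Type*} [CommRing R]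
    {M : Matrix ι ι R} (hM : IsUnit M) {w : ι → R} (hw : w ≠ 0) :
    ∃ k : ι → ℤ, (M *ᵥ fun i => (k i : R)) ⬝ᵥ w ≠ 0 := by
  have hwM : w ᵥ* M ≠ 0 := fun h =>
    hw (vecMul_injective_of_isUnit hM (h.trans (zero_vecMul M).symm))
  obtain ⟨i, hi⟩ := Function.ne_iff.mp hwM
  refine ⟨Pi.single i 1, ?_⟩
  rw [dotProduct_comm, dotProduct_mulVec]
  simpa [Pi.single_apply, dotProduct] using hi

end Matrix

theorem IsUnit.dense_image_mul_left {M : Type*} [Monoid M] [TopologicalSpace M] [ContinuousMul M]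
    {u : M} (hu : IsUnit u) {s : Set M} (hs : Dense s) : Dense ((u * ·) '' s) :=
  (Function.Surjective.denseRange fun w => ⟨((hu.unit⁻¹ : Mˣ) : M) * w,
    hu.unit.mul_inv_cancel_left w⟩).dense_image (continuous_const_mul u) hs

namespace ContinuousMap

variable {X : Type*} [TopologicalSpace X]

theorem dense_span_of_separatesPoints [CompactSpace X] {𝕜 : Type*} [RCLike 𝕜]
    (S : Submonoid C(X, 𝕜)) (hstar : ∀ f ∈ S, star f ∈ S)
    (hsep : ∀ ⦃x y : X⦄, x ≠ y → ∃ f ∈ S, f x ≠ f y) :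
    Dense (Submodule.span 𝕜 (S : Set C(X, 𝕜)) : Set C(X, 𝕜)) := by
  set T := StarAlgebra.adjoin 𝕜 (S : Set C(X, 𝕜))
  have hT : Subalgebra.toSubmodule T.toSubalgebra = Submodule.span 𝕜 S := by
    rw [StarAlgebra.adjoin_toSubalgebra,
      Set.union_eq_self_of_subset_right fun f hf => by simpa using hstar _ hf,
      Algebra.adjoin_eq_span, Submonoid.closure_eq]
  have hTsep : T.SeparatesPoints := fun x y hxy => by
    obtain ⟨f, hf, hne⟩ := hsep hxy
    exact ⟨f, ⟨f, StarAlgebra.subset_adjoin 𝕜 _ hf, rfl⟩, hne⟩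
  rw [Submodule.dense_iff_topologicalClosure_eq_top, ← hT]
  exact congr_arg (Subalgebra.toSubmodule <| StarSubalgebra.toSubalgebra ·)
    (starSubalgebra_topologicalClosure_eq_top_of_separatesPoints T hTsep)

noncomputable def expOfReal (f : C(X, ℝ)) : C(X, ℂ) :=
  ⟨fun x => Complex.exp (f x), by fun_prop⟩

@[simp]
theorem expOfReal_apply (f : C(X, ℝ)) (x : X) : expOfReal f x = Complex.exp (f x) := rfl

theorem expOfReal_add (f g : C(X, ℝ)) : expOfReal (f + g) = expOfReal f * expOfReal g := by
  ext x
  simp [Complex.exp_add]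

theorem expOfReal_const_add (c : ℝ) (f : C(X, ℝ)) :
    expOfReal (const X c + f) = Complex.exp c • expOfReal f := by
  ext x
  simp [Complex.exp_add]

@[simp]
theorem expOfReal_zero : expOfReal (0 : C(X, ℝ)) = 1 := by
  ext x
  simp

@[simp]
theorem star_expOfReal (f : C(X, ℝ)) : star (expOfReal f) = expOfReal f := by
  ext x
  simp [← Complex.exp_conj]

theorem isUnit_expOfReal (f : C(X, ℝ)) : IsUnit (expOfReal f) :=
  IsUnit.of_mul_eq_one (expOfReal (-f)) (by rw [← expOfReal_add, add_neg_cancel, expOfReal_zero])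

theorem expOfReal_apply_eq_iff (f : C(X, ℝ)) (x y : X) :
    expOfReal f x = expOfReal f y ↔ f x = f y := by
  simp only [expOfReal_apply, ← Complex.ofReal_exp, Complex.ofReal_inj, Real.exp_eq_exp]

theorem dense_span_range_expOfReal [CompactSpace X] {M : Type*} [AddMonoid M]
    (φ : M →+ C(X, ℝ)) (hsep : ∀ ⦃x y : X⦄, x ≠ y → ∃ m, φ m x ≠ φ m y) :
    Dense (Submodule.span ℂ (Set.range (expOfReal ∘ φ)) : Set C(X, ℂ)) := by
  let S : Submonoid C(X, ℂ) :=
    { carrier := Set.range (expOfReal ∘ φ)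
      mul_mem' := by
        rintro _ _ ⟨a, rfl⟩ ⟨b, rfl⟩
        exact ⟨a + b, by simp [expOfReal_add]⟩
      one_mem' := ⟨0, by simp⟩ }
  refine dense_span_of_separatesPoints S (by rintro _ ⟨m, rfl⟩; exact ⟨m, by simp⟩) ?_
  intro x y hxy
  obtain ⟨m, hm⟩ := hsep hxy
  exact ⟨_, ⟨m, rfl⟩, (expOfReal_apply_eq_iff _ _ _).not.mpr hm⟩

end ContinuousMap

section Gaussian

open ContinuousMap

variable {ι : Type*} [Fintype ι] (B : Matrix ι ι ℝ) (K : Set (ι → ℝ))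

noncomputable def linearExponent : (ι → ℝ) →+ C(K, ℝ) :=
  AddMonoidHom.mk' (fun l => ⟨fun x => 2 * (l ⬝ᵥ B *ᵥ x), by fun_prop⟩)
    fun a b => by ext; simp [add_dotProduct, mul_add]

noncomputable def gaussianExponent (l : ι → ℝ) : C(K, ℝ) :=
  ⟨fun x => -(((x : ι → ℝ) - l) ⬝ᵥ B *ᵥ ((x : ι → ℝ) - l)), by fun_prop⟩

variable {B K}

theorem gaussianExponent_zero_add_linearExponent (hB : B.IsSymm) (l : ι → ℝ) :
    gaussianExponent B K 0 + linearExponent B K l =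
      const K (l ⬝ᵥ B *ᵥ l) + gaussianExponent B K l := by
  ext x
  simp only [ContinuousMap.add_apply, const_apply, gaussianExponent, linearExponent,
    ContinuousMap.coe_mk, AddMonoidHom.mk'_apply, sub_zero, hB.sub_dotProduct_mulVec_sub]
  ring

theorem exists_linearExponent_intCast_ne [DecidableEq ι] (hB : IsUnit B)
    {M : Matrix ι ι ℝ} (hM : IsUnit M) {x y : K} (hxy : x ≠ y) :
    ∃ k : ι → ℤ, linearExponent B K (M *ᵥ fun i => (k i : ℝ)) x ≠
      linearExponent B K (M *ᵥ fun i => (k i : ℝ)) y := by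
  have hBxy : B *ᵥ ((x : ι → ℝ) - y) ≠ 0 := by
    rw [← mulVec_zero B]
    exact (mulVec_injective_iff_isUnit.mpr hB).ne (sub_ne_zero.mpr (Subtype.coe_ne_coe.mpr hxy))
  obtain ⟨k, hk⟩ := exists_dotProduct_mulVec_intCast_ne_zero hM hBxy
  refine ⟨k, fun h => hk ?_⟩
  simp only [linearExponent, AddMonoidHom.mk'_apply, ContinuousMap.coe_mk] at h
  rw [mulVec_sub, dotProduct_sub]
  linarith

theorem dense_span_expOfReal_gaussianExponent [DecidableEq ι] [CompactSpace K] (hB : B.IsSymm)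
    (hBu : IsUnit B) {M : Matrix ι ι ℝ} (hM : IsUnit M) :
    Dense (Submodule.span ℂ
      (Set.range fun k : ι → ℤ => expOfReal (gaussianExponent B K (M *ᵥ fun i => (k i : ℝ))))
        : Set C(K, ℂ)) := by
  let φ := (linearExponent B K).comp
    (M.mulVecLin.toAddMonoidHom.comp (AddMonoidHom.compLeft (Int.castAddHom ℝ) ι))
  let G := expOfReal (gaussianExponent B K 0)
  refine ((isUnit_expOfReal _).dense_image_mul_left
    (dense_span_range_expOfReal φ fun x y hxy => exists_linearExponent_intCast_ne hBu hM hxy)).mono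
      (Set.image_subset_iff.mpr (Submodule.span_le.mpr ?_ :
        _ ≤ (Submodule.span ℂ _).comap (LinearMap.mulLeft ℂ G)))
  rintro _ ⟨k, rfl⟩
  have hφ : φ k = linearExponent B K (M *ᵥ fun i => (k i : ℝ)) := rfl
  rw [SetLike.mem_coe, Submodule.mem_comap, LinearMap.mulLeft_apply, Function.comp_apply,
    ← expOfReal_add, hφ, gaussianExponent_zero_add_linearExponent hB, expOfReal_const_add]
  exact Submodule.smul_mem _ _ (Submodule.subset_span ⟨k, rfl⟩)

end Gaussian

/-- Multivariable Zalik theorem (`C(K)` version): for a Hermitian `A ∈ ℂⁿˣⁿ` with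
invertible real part, the span of the translated Gaussians
`x ↦ exp(−(x−λ)·A(x−λ))`, `λ ∈ Λ`, is dense in `C(K, ℂ)` for any lattice `Λ`. -/
theorem multivariable_zalik_continuousMap
    (n : ℕ) (A : Matrix (Fin n) (Fin n) ℂ) (hA : A.IsHermitian)
    (hRe : IsUnit (A.map Complex.re))
    (Λ : Set (Fin n → ℝ)) (hΛ : IsLattice n Λ)
    (K : Set (Fin n → ℝ)) (hK : IsCompact K) :
    Dense (↑(Submodule.span ℂ
        {g : C(K, ℂ) | ∃ lam ∈ Λ, ∀ x : K,
          g x = Complex.exp (-((fun i => (((x : Fin n → ℝ) i - lam i : ℝ) : ℂ)) ⬝ᵥ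
            A.mulVec fun i => (((x : Fin n → ℝ) i - lam i : ℝ) : ℂ)))})
      : Set C(K, ℂ)) := by
  have := isCompact_iff_compactSpace.mp hK
  obtain ⟨M, hM, rfl⟩ := hΛ
  refine (dense_span_expOfReal_gaussianExponent hA.isSymm_map_re hRe hM).mono
    (Submodule.span_mono ?_)
  rintro _ ⟨k, rfl⟩
  refine ⟨_, ⟨k, rfl⟩, fun x => ?_⟩
  have hform := hA.ofReal_dotProduct_mulVec_ofReal ((x : Fin n → ℝ) - M *ᵥ fun i => (k i : ℝ))
  simp only [Pi.sub_apply] at hform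
  rw [hform, ContinuousMap.expOfReal_apply, gaussianExponent, ContinuousMap.coe_mk,
    Complex.ofReal_neg]
end

section
/- Let A ∈ ℂⁿˣⁿ be a Hermitian matrix such that the real part Re(A) is invertible, let Λ ⊂ ℝⁿ be any lattice, let K ⊂ ℝⁿ be compact, and let 1 ≤ p < ∞. Then the complex linear span of the family of functions {x ↦ exp(−(x−λ)·A(x−λ)) : λ ∈ Λ} is dense in Lᵖ(K) (complex-valued, with respect to Lebesgue measure restricted to K). -/
open Matrix MeasureTheory
open scoped ENNReal

namespace ZalikAux

variable {n : ℕ}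

lemma continuous_dotconst (v : Fin n → ℝ) : Continuous fun x : Fin n → ℝ => x ⬝ᵥ v := by
  simp only [dotProduct]
  exact continuous_finset_sum _ fun i _ => (continuous_apply i).mul continuous_const

lemma continuous_quad (R : Matrix (Fin n) (Fin n) ℝ) :
    Continuous fun x : Fin n → ℝ => x ⬝ᵥ R.mulVec x := by
  simp only [dotProduct, Matrix.mulVec]
  exact continuous_finset_sum _ fun i _ => (continuous_apply i).mul
    (continuous_finset_sum _ fun j _ => continuous_const.mul (continuous_apply j))

lemma ReA_symm (A : Matrix (Fin n) (Fin n) ℂ) (hA : A.IsHermitian) :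
    (A.map Complex.re)ᵀ = A.map Complex.re := by
  ext i j
  simp only [Matrix.transpose_apply, Matrix.map_apply]
  rw [← hA.apply i j]
  simp [RCLike.star_def]

lemma symm_dot (R : Matrix (Fin n) (Fin n) ℝ) (hR : Rᵀ = R) (v w : Fin n → ℝ) :
    v ⬝ᵥ R.mulVec w = w ⬝ᵥ R.mulVec v := by
  rw [dotProduct_mulVec, ← hR, Matrix.vecMul_transpose, hR, dotProduct_comm]

lemma lattice_sep (M : Matrix (Fin n) (Fin n) ℝ) (hM : IsUnit M) (u : Fin n → ℝ) (hu : u ≠ 0) :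
    ∃ k : Fin n → ℤ, (M.mulVec fun i => (k i : ℝ)) ⬝ᵥ u ≠ 0 := by
  by_contra h
  push_neg at h
  have hT : Mᵀ.mulVec u = 0 := by
    funext i
    have := h (Pi.single i 1)
    have hcast : (fun j => ((Pi.single i (1:ℤ) : Fin n → ℤ) j : ℝ)) = Pi.single i (1:ℝ) := by
      funext j
      by_cases hji : j = i
      · subst hji; simp
      · simp [Pi.single_apply, hji]
    rw [hcast, Matrix.mulVec_single] at this
    simpa [Matrix.mulVec, dotProduct, Matrix.transpose_apply, mul_comm] using this
  have hinj : Function.Injective (Mᵀ.mulVec) :=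
    Matrix.mulVec_injective_iff_isUnit.mpr ((Matrix.isUnit_transpose M).mpr hM)
  exact hu (hinj (by simpa using hT))

lemma cross_id (A : Matrix (Fin n) (Fin n) ℂ) (hA : A.IsHermitian) (s t : Fin n → ℝ) :
    (fun i => (s i : ℂ)) ⬝ᵥ A.mulVec (fun i => (t i : ℂ))
      + (fun i => (t i : ℂ)) ⬝ᵥ A.mulVec (fun i => (s i : ℂ))
    = 2 * ((s ⬝ᵥ (A.map Complex.re).mulVec t : ℝ) : ℂ) := by
  have key : ∀ i j, A i j + A j i = 2 * ((A i j).re : ℂ) := by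
    intro i j
    rw [← hA.apply j i]
    simpa [RCLike.star_def, mul_comm] using (Complex.add_conj (A i j))
  have e2 : (fun i => (t i : ℂ)) ⬝ᵥ A.mulVec (fun i => (s i : ℂ))
      = ∑ i, ∑ j, (t j : ℂ) * (A j i * (s i : ℂ)) := by
    simp only [dotProduct, Matrix.mulVec, Finset.mul_sum]
    exact Finset.sum_comm
  have e1 : (fun i => (s i : ℂ)) ⬝ᵥ A.mulVec (fun i => (t i : ℂ))
      = ∑ i, ∑ j, (s i : ℂ) * (A i j * (t j : ℂ)) := by
    simp only [dotProduct, Matrix.mulVec, Finset.mul_sum]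
  rw [e1, e2, ← Finset.sum_add_distrib]
  have : ∀ i ∈ Finset.univ, (∑ j, (s i : ℂ) * (A i j * (t j : ℂ)))
      + (∑ j, (t j : ℂ) * (A j i * (s i : ℂ)))
      = ∑ j, 2 * ((s i : ℂ) * (((A i j).re : ℂ) * (t j : ℂ))) := by
    intro i _
    rw [← Finset.sum_add_distrib]
    refine Finset.sum_congr rfl fun j _ => ?_
    have hk := key i j
    calc (s i : ℂ) * (A i j * (t j : ℂ)) + (t j : ℂ) * (A j i * (s i : ℂ))
        = (s i : ℂ) * (t j : ℂ) * (A i j + A j i) := by ring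
      _ = 2 * ((s i : ℂ) * (((A i j).re : ℂ) * (t j : ℂ))) := by rw [hk]; ring
  rw [Finset.sum_congr rfl this]
  simp only [dotProduct, Matrix.mulVec, Matrix.map_apply]
  push_cast
  rw [Finset.mul_sum]
  refine Finset.sum_congr rfl fun i _ => ?_
  rw [Finset.mul_sum, Finset.mul_sum]

lemma quad_id (A : Matrix (Fin n) (Fin n) ℂ) (hA : A.IsHermitian) (t : Fin n → ℝ) :
    (fun i => (t i : ℂ)) ⬝ᵥ A.mulVec (fun i => (t i : ℂ))
      = ((t ⬝ᵥ (A.map Complex.re).mulVec t : ℝ) : ℂ) := by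
  have h := cross_id A hA t t
  rw [← two_mul] at h
  exact mul_left_cancel₀ two_ne_zero h

lemma factor_id (A : Matrix (Fin n) (Fin n) ℂ) (hA : A.IsHermitian) (x lam : Fin n → ℝ) :
    Complex.exp (-((fun i => ((x i - lam i : ℝ) : ℂ)) ⬝ᵥ
        A.mulVec fun i => ((x i - lam i : ℝ) : ℂ)))
    = ((Real.exp (-(lam ⬝ᵥ (A.map Complex.re).mulVec lam)
        - x ⬝ᵥ (A.map Complex.re).mulVec x
        + 2 * (x ⬝ᵥ (A.map Complex.re).mulVec lam)) : ℝ) : ℂ) := by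
  have hfun : (fun i => ((x i - lam i : ℝ) : ℂ))
      = (fun i => (x i : ℂ)) - (fun i => (lam i : ℂ)) := by
    funext i; push_cast; rfl
  have expand : ((fun i => ((x i - lam i : ℝ) : ℂ)) ⬝ᵥ
        A.mulVec fun i => ((x i - lam i : ℝ) : ℂ))
      = ((x ⬝ᵥ (A.map Complex.re).mulVec x : ℝ) : ℂ)
        + ((lam ⬝ᵥ (A.map Complex.re).mulVec lam : ℝ) : ℂ)
        - 2 * ((x ⬝ᵥ (A.map Complex.re).mulVec lam : ℝ) : ℂ) := by
    rw [hfun, Matrix.mulVec_sub, sub_dotProduct, dotProduct_sub,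
      dotProduct_sub, quad_id A hA x, quad_id A hA lam]
    have h2 : (fun i => (x i : ℂ)) ⬝ᵥ A.mulVec (fun i => (lam i : ℂ))
        + (fun i => (lam i : ℂ)) ⬝ᵥ A.mulVec (fun i => (x i : ℂ))
        = 2 * ((x ⬝ᵥ (A.map Complex.re).mulVec lam : ℝ) : ℂ) := cross_id A hA x lam
    linear_combination -h2
  rw [expand]
  rw [show -(((x ⬝ᵥ (A.map Complex.re).mulVec x : ℝ) : ℂ)
        + ((lam ⬝ᵥ (A.map Complex.re).mulVec lam : ℝ) : ℂ)
        - 2 * ((x ⬝ᵥ (A.map Complex.re).mulVec lam : ℝ) : ℂ))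
      = ((-(lam ⬝ᵥ (A.map Complex.re).mulVec lam)
        - x ⬝ᵥ (A.map Complex.re).mulVec x
        + 2 * (x ⬝ᵥ (A.map Complex.re).mulVec lam) : ℝ) : ℂ) from by push_cast; ring]
  exact (Complex.ofReal_exp _).symm

/-- The positive "exponential generator" `x ↦ exp (2 ⟨x, R λ⟩)` restricted to `K`,
as a continuous map, with complex values. -/
noncomputable def Egc (R : Matrix (Fin n) (Fin n) ℝ) (K : Set (Fin n → ℝ)) (lam : Fin n → ℝ) :
    C(↥K, ℂ) :=
  ⟨fun z => ((Real.exp (2 * ((z : Fin n → ℝ) ⬝ᵥ R.mulVec lam)) : ℝ) : ℂ),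
    Complex.continuous_ofReal.comp (Real.continuous_exp.comp
      (continuous_const.mul ((continuous_dotconst (R.mulVec lam)).comp continuous_subtype_val)))⟩

@[simp] lemma Egc_apply (R : Matrix (Fin n) (Fin n) ℝ) (K : Set (Fin n → ℝ))
    (lam : Fin n → ℝ) (z : ↥K) :
    Egc R K lam z = ((Real.exp (2 * ((z : Fin n → ℝ) ⬝ᵥ R.mulVec lam)) : ℝ) : ℂ) := rfl

lemma Egc_mul (R : Matrix (Fin n) (Fin n) ℝ) (K : Set (Fin n → ℝ)) (lam mu : Fin n → ℝ) :
    Egc R K lam * Egc R K mu = Egc R K (lam + mu) := by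
  ext z
  simp only [ContinuousMap.mul_apply, Egc_apply]
  rw [← Complex.ofReal_mul, ← Real.exp_add]
  norm_cast
  rw [Matrix.mulVec_add, dotProduct_add]
  ring_nf

lemma Egc_zero (R : Matrix (Fin n) (Fin n) ℝ) (K : Set (Fin n → ℝ)) :
    Egc R K 0 = 1 := by
  ext z
  simp [Egc_apply]

lemma star_Egc (R : Matrix (Fin n) (Fin n) ℝ) (K : Set (Fin n → ℝ)) (lam : Fin n → ℝ) :
    star (Egc R K lam) = Egc R K lam := by
  ext z
  simp only [ContinuousMap.star_apply, Egc_apply, RCLike.star_def, Complex.conj_ofReal]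

open Classical in
/-- Multiplication by the truncated Gaussian `exp (-⟨x, R x⟩)`, at the level of functions. -/
noncomputable def Pmap (R : Matrix (Fin n) (Fin n) ℝ) (K : Set (Fin n → ℝ)) (g : C(↥K, ℂ)) :
    (Fin n → ℝ) → ℂ :=
  fun x => if h : x ∈ K then ((Real.exp (-(x ⬝ᵥ R.mulVec x)) : ℝ) : ℂ) * g ⟨x, h⟩ else 0

lemma Pmap_restrict (R : Matrix (Fin n) (Fin n) ℝ) (K : Set (Fin n → ℝ)) (g : C(↥K, ℂ)) :
    K.domRestrict (Pmap R K g)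
      = fun z : ↥K => ((Real.exp (-((z : Fin n → ℝ) ⬝ᵥ R.mulVec z)) : ℝ) : ℂ) * g z := by
  funext z
  simp only [Set.domRestrict_apply, Pmap, z.2, dif_pos, Subtype.coe_eta]

lemma Pmap_continuousOn (R : Matrix (Fin n) (Fin n) ℝ) (K : Set (Fin n → ℝ)) (g : C(↥K, ℂ)) :
    ContinuousOn (Pmap R K g) K := by
  rw [continuousOn_iff_continuous_restrict, Pmap_restrict R K g]
  exact ((Complex.continuous_ofReal.comp (Real.continuous_exp.comp
    ((continuous_quad R).comp continuous_subtype_val).neg))).mul g.continuous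

lemma Pmap_apply_of_mem (R : Matrix (Fin n) (Fin n) ℝ) (K : Set (Fin n → ℝ)) (g : C(↥K, ℂ))
    {x : Fin n → ℝ} (hx : x ∈ K) :
    Pmap R K g x = ((Real.exp (-(x ⬝ᵥ R.mulVec x)) : ℝ) : ℂ) * g ⟨x, hx⟩ := dif_pos hx

lemma Pmap_norm_le (R : Matrix (Fin n) (Fin n) ℝ) (K : Set (Fin n → ℝ)) [CompactSpace ↥K]
    (g : C(↥K, ℂ)) {x : Fin n → ℝ} (hx : x ∈ K) {C : ℝ}
    (hC : ∀ y ∈ K, Real.exp (-(y ⬝ᵥ R.mulVec y)) ≤ C) :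
    ‖Pmap R K g x‖ ≤ C * ‖g‖ := by
  rw [Pmap_apply_of_mem R K g hx, norm_mul, Complex.norm_real, Real.norm_eq_abs,
    abs_of_pos (Real.exp_pos _)]
  exact mul_le_mul (hC x hx) (g.norm_coe_le_norm ⟨x, hx⟩) (norm_nonneg _)
    (le_trans (Real.exp_pos _).le (hC x hx))

lemma Pmap_add (R : Matrix (Fin n) (Fin n) ℝ) (K : Set (Fin n → ℝ)) (g h : C(↥K, ℂ)) :
    Pmap R K (g + h) = Pmap R K g + Pmap R K h := by
  funext x
  by_cases hx : x ∈ K <;> simp [Pmap, hx, mul_add]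

lemma Pmap_smul (R : Matrix (Fin n) (Fin n) ℝ) (K : Set (Fin n → ℝ)) (c : ℂ) (g : C(↥K, ℂ)) :
    Pmap R K (c • g) = c • Pmap R K g := by
  funext x
  by_cases hx : x ∈ K <;> simp [Pmap, hx, smul_eq_mul] <;> ring_nf

end ZalikAux

/-- Multivariable Zalik theorem (`Lᵖ(K)` version): for a Hermitian `A ∈ ℂⁿˣⁿ` with
invertible real part, the span of the translated Gaussians
`x ↦ exp(−(x−λ)·A(x−λ))`, `λ ∈ Λ`, is dense in `Lᵖ(K)` for any lattice `Λ`
and `1 ≤ p < ∞`. -/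
theorem multivariable_zalik_Lp
    (n : ℕ) (A : Matrix (Fin n) (Fin n) ℂ) (hA : A.IsHermitian)
    (hRe : IsUnit (A.map Complex.re))
    (Λ : Set (Fin n → ℝ)) (hΛ : IsLattice n Λ)
    (K : Set (Fin n → ℝ)) (hK : IsCompact K)
    (p : ℝ≥0∞) [Fact (1 ≤ p)] (hp : p ≠ ⊤) :
    Dense (↑(Submodule.span ℂ
        {F : Lp ℂ p (volume.restrict K) |
          ∃ lam ∈ Λ, (F : (Fin n → ℝ) → ℂ) =ᵐ[volume.restrict K]
            fun x => Complex.exp (-((fun i => ((x i - lam i : ℝ) : ℂ)) ⬝ᵥ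
              A.mulVec fun i => ((x i - lam i : ℝ) : ℂ)))})
      : Set (Lp ℂ p (volume.restrict K))) := by
  classical
  obtain ⟨M, hMu, hLeq⟩ := hΛ
  set R : Matrix (Fin n) (Fin n) ℝ := A.map Complex.re with hRdef
  have hRsymm : Rᵀ = R := ZalikAux.ReA_symm A hA
  have hKm : MeasurableSet K := hK.isClosed.measurableSet
  haveI : IsFiniteMeasure (volume.restrict K) :=
    ⟨by simpa [Measure.restrict_apply_univ] using hK.measure_lt_top⟩
  haveI : CompactSpace ↥K := isCompact_iff_compactSpace.mp hK
  -- lattice properties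
  have h0 : (0 : Fin n → ℝ) ∈ Λ := by
    rw [hLeq]
    refine ⟨0, ?_⟩
    have h00 : (fun i => ((0 : Fin n → ℤ) i : ℝ)) = (0 : Fin n → ℝ) := by
      funext i; simp
    rw [h00, Matrix.mulVec_zero]
  have hadd : ∀ a ∈ Λ, ∀ b ∈ Λ, a + b ∈ Λ := by
    intro a ha b hb
    rw [hLeq] at ha hb ⊢
    obtain ⟨ka, rfl⟩ := ha
    obtain ⟨kb, rfl⟩ := hb
    refine ⟨ka + kb, ?_⟩
    have hcast : (fun i => (((ka + kb) i : ℤ) : ℝ))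
        = (fun i => ((ka i : ℤ) : ℝ)) + fun i => ((kb i : ℤ) : ℝ) := by
      funext i; simp
    rw [hcast, Matrix.mulVec_add]
  have hsepΛ : ∀ u : Fin n → ℝ, u ≠ 0 → ∃ lam ∈ Λ, lam ⬝ᵥ u ≠ 0 := by
    intro u hu
    obtain ⟨k, hk⟩ := ZalikAux.lattice_sep M hMu u hu
    exact ⟨_, by rw [hLeq]; exact ⟨k, rfl⟩, hk⟩
  -- the generating set of the span
  set SS : Set (Lp ℂ p (volume.restrict K)) :=
    {F : Lp ℂ p (volume.restrict K) |
      ∃ lam ∈ Λ, (F : (Fin n → ℝ) → ℂ) =ᵐ[volume.restrict K]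
        fun x => Complex.exp (-((fun i => ((x i - lam i : ℝ) : ℂ)) ⬝ᵥ
          A.mulVec fun i => ((x i - lam i : ℝ) : ℂ)))} with hSSdef
  -- the Gaussians are in ℒp
  have hfg : ∀ lam : Fin n → ℝ,
      MemLp (fun x => Complex.exp (-((fun i => ((x i - lam i : ℝ) : ℂ)) ⬝ᵥ
          A.mulVec fun i => ((x i - lam i : ℝ) : ℂ)))) p (volume.restrict K) := by
    intro lam
    have heq : (fun x : Fin n → ℝ => Complex.exp (-((fun i => ((x i - lam i : ℝ) : ℂ)) ⬝ᵥ
          A.mulVec fun i => ((x i - lam i : ℝ) : ℂ))))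
        = fun x => ((Real.exp (-(lam ⬝ᵥ R.mulVec lam) - x ⬝ᵥ R.mulVec x
            + 2 * (x ⬝ᵥ R.mulVec lam)) : ℝ) : ℂ) :=
      funext fun x => ZalikAux.factor_id A hA x lam
    rw [heq]
    have hcont : Continuous (fun x : Fin n → ℝ =>
        ((Real.exp (-(lam ⬝ᵥ R.mulVec lam) - x ⬝ᵥ R.mulVec x
            + 2 * (x ⬝ᵥ R.mulVec lam)) : ℝ) : ℂ)) := by
      refine Complex.continuous_ofReal.comp (Real.continuous_exp.comp ?_)
      exact ((continuous_const.sub (ZalikAux.continuous_quad R)).add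
        (continuous_const.mul (ZalikAux.continuous_dotconst (R.mulVec lam))))
    obtain ⟨C, hC⟩ := hK.exists_bound_of_continuousOn hcont.continuousOn
    exact MemLp.of_bound hcont.aestronglyMeasurable C
      (by filter_upwards [ae_restrict_mem hKm] with x hx using hC x hx)
  -- the multiplication operator Θ
  obtain ⟨C0, hC0⟩ := hK.exists_bound_of_continuousOn
    (Real.continuous_exp.comp (ZalikAux.continuous_quad R).neg).continuousOn
  set MPhi : ℝ := max C0 0 with hMPhi
  have hMPhi0 : (0 : ℝ) ≤ MPhi := le_max_right _ _
  have hPhile : ∀ y ∈ K, Real.exp (-(y ⬝ᵥ R.mulVec y)) ≤ MPhi := by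
    intro y hy
    have h := hC0 y hy
    rw [Real.norm_eq_abs] at h
    exact le_trans (le_abs_self _) (h.trans (le_max_left _ _))
  have hPmem : ∀ g : C(↥K, ℂ), MemLp (ZalikAux.Pmap R K g) p (volume.restrict K) := by
    intro g
    refine MemLp.of_bound ((ZalikAux.Pmap_continuousOn R K g).aestronglyMeasurable hKm)
      (MPhi * ‖g‖) ?_
    filter_upwards [ae_restrict_mem hKm] with x hx
    exact ZalikAux.Pmap_norm_le R K g hx hPhile
  let Θ : C(↥K, ℂ) →ₗ[ℂ] Lp ℂ p (volume.restrict K) :=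
    { toFun := fun g => (hPmem g).toLp (ZalikAux.Pmap R K g)
      map_add' := fun g h => by
        rw [← MemLp.toLp_add (hPmem g) (hPmem h)]
        exact MemLp.toLp_congr _ _ (Filter.Eventually.of_forall fun x =>
          congrFun (ZalikAux.Pmap_add R K g h) x)
      map_smul' := fun c g => by
        rw [RingHom.id_apply, ← MemLp.toLp_const_smul c (hPmem g)]
        show (hPmem (c • g)).toLp (ZalikAux.Pmap R K (c • g)) = _
        exact MemLp.toLp_congr _ _ (Filter.Eventually.of_forall fun x =>
          congrFun (ZalikAux.Pmap_smul R K c g) x) }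
  have hΘapp : ∀ g, Θ g = (hPmem g).toLp (ZalikAux.Pmap R K g) := fun g => rfl
  set cB : ℝ := ((volume.restrict K) Set.univ ^ p.toReal⁻¹).toReal * MPhi with hcBdef
  have hcB0 : 0 ≤ cB := mul_nonneg ENNReal.toReal_nonneg hMPhi0
  have hΘle : ∀ g : C(↥K, ℂ), ‖Θ g‖ ≤ cB * ‖g‖ := by
    intro g
    rw [hΘapp g, Lp.norm_toLp]
    have h2 : eLpNorm (ZalikAux.Pmap R K g) p (volume.restrict K)
        ≤ (volume.restrict K) Set.univ ^ p.toReal⁻¹ * ENNReal.ofReal (MPhi * ‖g‖) := by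
      refine eLpNorm_le_of_ae_bound ?_
      filter_upwards [ae_restrict_mem hKm] with x hx
      exact ZalikAux.Pmap_norm_le R K g hx hPhile
    have hfin : (volume.restrict K) Set.univ ^ p.toReal⁻¹
        * ENNReal.ofReal (MPhi * ‖g‖) ≠ ⊤ :=
      ENNReal.mul_ne_top (ENNReal.rpow_ne_top_of_nonneg (by positivity) (measure_ne_top _ _))
        ENNReal.ofReal_ne_top
    have h3 := ENNReal.toReal_mono hfin h2
    rw [ENNReal.toReal_mul, ENNReal.toReal_ofReal (mul_nonneg hMPhi0 (norm_nonneg g))] at h3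
    rw [hcBdef, mul_assoc]
    exact h3
  -- the subalgebra generated by the exponentials
  set genC : Set C(↥K, ℂ) := (fun lam => ZalikAux.Egc R K lam) '' Λ with hgendef
  set W : Submodule ℂ C(↥K, ℂ) := Submodule.span ℂ genC with hWdef
  have honeW : (1 : C(↥K, ℂ)) ∈ W :=
    ZalikAux.Egc_zero R K ▸ Submodule.subset_span ⟨0, h0, rfl⟩
  have hmulW : ∀ x y : C(↥K, ℂ), x ∈ W → y ∈ W → x * y ∈ W := by
    intro a b ha hb
    have hm : a * b ∈ W * W := Submodule.mul_mem_mul ha hb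
    rw [hWdef, Submodule.span_mul_span] at hm
    refine Submodule.span_le.mpr ?_ hm
    rintro f hf
    rw [Set.mem_mul] at hf
    obtain ⟨f1, hf1, f2, hf2, hfe⟩ := hf
    obtain ⟨lam, hlam, rfl⟩ := hf1
    obtain ⟨mu, hmu, rfl⟩ := hf2
    rw [← hfe, ZalikAux.Egc_mul]
    exact Submodule.subset_span ⟨lam + mu, hadd _ hlam _ hmu, rfl⟩
  have hstarW : ∀ a ∈ W, star a ∈ W := by
    intro a ha
    refine Submodule.span_induction (p := fun x _ => star x ∈ W) ?_ ?_ ?_ ?_ ha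
    · rintro f ⟨lam, hlam, rfl⟩
      show star (ZalikAux.Egc R K lam) ∈ W
      rw [ZalikAux.star_Egc]
      exact Submodule.subset_span ⟨lam, hlam, rfl⟩
    · show star (0 : C(↥K, ℂ)) ∈ W
      rw [star_zero]; exact Submodule.zero_mem W
    · intro x y hx hy hx' hy'
      show star (x + y) ∈ W
      rw [star_add]; exact Submodule.add_mem W hx' hy'
    · intro c x hx hx'
      show star (c • x) ∈ W
      rw [star_smul]; exact Submodule.smul_mem W _ hx'
  let T : StarSubalgebra ℂ C(↥K, ℂ) :=
    { W.toSubalgebra honeW hmulW with star_mem' := fun {a} ha => hstarW a ha }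
  have hsepT : T.SeparatesPoints := by
    rintro x y hxy
    have hxyv : (x : Fin n → ℝ) - (y : Fin n → ℝ) ≠ 0 := by
      intro h
      exact hxy (Subtype.coe_injective (sub_eq_zero.mp h))
    have hu : R.mulVec ((x : Fin n → ℝ) - (y : Fin n → ℝ)) ≠ 0 := by
      intro h
      apply hxyv
      have hinj : Function.Injective (R.mulVec) := Matrix.mulVec_injective_iff_isUnit.mpr hRe
      exact hinj (by simpa [Matrix.mulVec_zero] using h)
    obtain ⟨lam, hlam, hlu⟩ := hsepΛ _ hu
    refine ⟨_, ⟨ZalikAux.Egc R K lam,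
      show ZalikAux.Egc R K lam ∈ W from Submodule.subset_span ⟨lam, hlam, rfl⟩, rfl⟩, ?_⟩
    simp only [ZalikAux.Egc_apply]
    intro hEq
    apply hlu
    have h1 : Real.exp (2 * ((x : Fin n → ℝ) ⬝ᵥ R.mulVec lam))
        = Real.exp (2 * ((y : Fin n → ℝ) ⬝ᵥ R.mulVec lam)) := by exact_mod_cast hEq
    have h2 := Real.exp_injective h1
    have h3 : (x : Fin n → ℝ) ⬝ᵥ R.mulVec lam = (y : Fin n → ℝ) ⬝ᵥ R.mulVec lam := by linarith
    rw [ZalikAux.symm_dot R hRsymm, sub_dotProduct]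
    rw [h3]
    ring
  have hSW : T.topologicalClosure = ⊤ :=
    ContinuousMap.starSubalgebra_topologicalClosure_eq_top_of_separatesPoints T hsepT
  -- Θ maps W into the span
  have hgenV : ∀ g ∈ W, Θ g ∈ Submodule.span ℂ SS := by
    have hle : W ≤ (Submodule.span ℂ SS).comap Θ := by
      rw [hWdef]
      refine Submodule.span_le.mpr ?_
      rintro f ⟨lam, hlam, rfl⟩
      show Θ (ZalikAux.Egc R K lam) ∈ Submodule.span ℂ SS
      have hFS : (hfg lam).toLp _ ∈ SS := ⟨lam, hlam, MemLp.coeFn_toLp _⟩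
      have key : Θ (ZalikAux.Egc R K lam)
          = ((Real.exp (lam ⬝ᵥ R.mulVec lam) : ℝ) : ℂ) • (hfg lam).toLp _ := by
        rw [hΘapp, ← MemLp.toLp_const_smul]
        refine MemLp.toLp_congr _ _ ?_
        filter_upwards [ae_restrict_mem hKm] with x hx
        rw [ZalikAux.Pmap_apply_of_mem R K _ hx, ZalikAux.Egc_apply]
        rw [Pi.smul_apply, smul_eq_mul, ZalikAux.factor_id A hA x lam]
        rw [← Complex.ofReal_mul, ← Complex.ofReal_mul]
        refine congrArg Complex.ofReal ?_
        rw [← Real.exp_add, ← Real.exp_add]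
        congr 1
        ring
      rw [key]
      exact Submodule.smul_mem _ _ (Submodule.subset_span hFS)
    exact fun g hg => hle hg
  -- final density argument
  intro f
  rw [Metric.mem_closure_iff]
  intro ε hε
  have hε2 : (0 : ℝ) < ε / 2 := by linarith
  obtain ⟨g, hgapp, hgmem⟩ := (Lp.memLp f).exists_boundedContinuous_eLpNorm_sub_le hp
    (show ENNReal.ofReal (ε / 2) ≠ 0 by
      simp only [ne_eq, ENNReal.ofReal_eq_zero, not_le]; exact hε2)
  let G : C(↥K, ℂ) :=
    ⟨fun z => g (z : Fin n → ℝ) * ((Real.exp ((z : Fin n → ℝ) ⬝ᵥ R.mulVec z) : ℝ) : ℂ),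
      (g.continuous.comp continuous_subtype_val).mul (Complex.continuous_ofReal.comp
        (Real.continuous_exp.comp ((ZalikAux.continuous_quad R).comp continuous_subtype_val)))⟩
  have hΘG : Θ G = hgmem.toLp g := by
    rw [hΘapp]
    refine MemLp.toLp_congr _ _ ?_
    filter_upwards [ae_restrict_mem hKm] with x hx
    rw [ZalikAux.Pmap_apply_of_mem R K _ hx]
    show ((Real.exp (-(x ⬝ᵥ R.mulVec x)) : ℝ) : ℂ)
        * (g x * ((Real.exp (x ⬝ᵥ R.mulVec x) : ℝ) : ℂ)) = g x
    rw [mul_comm (g x), ← mul_assoc, ← Complex.ofReal_mul, ← Real.exp_add]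
    simp
  have hGT : G ∈ closure (T : Set C(↥K, ℂ)) := by
    have : G ∈ T.topologicalClosure := by rw [hSW]; exact StarSubalgebra.mem_top
    exact this
  set ε' : ℝ := (ε / 2) / (cB + 1) with hε'def
  have hε'pos : 0 < ε' := div_pos hε2 (by linarith)
  obtain ⟨b, hbT, hbd⟩ := Metric.mem_closure_iff.mp hGT ε' hε'pos
  have hbW : b ∈ W := hbT
  refine ⟨Θ b, hgenV b hbW, ?_⟩
  have d1 : dist f (Θ G) ≤ ε / 2 := by
    rw [hΘG, dist_eq_norm]
    have hae : ⇑(f - hgmem.toLp ⇑g) =ᵐ[volume.restrict K] ⇑f - ⇑g :=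
      (Lp.coeFn_sub f _).trans
        (Filter.EventuallyEq.sub (Filter.EventuallyEq.rfl) (MemLp.coeFn_toLp hgmem))
    rw [Lp.norm_def, eLpNorm_congr_ae hae]
    have h4 := ENNReal.toReal_mono ENNReal.ofReal_ne_top hgapp
    rw [ENNReal.toReal_ofReal hε2.le] at h4
    exact h4
  have d2 : dist (Θ G) (Θ b) < ε / 2 := by
    rw [dist_eq_norm, ← map_sub]
    have hb1 : ‖G - b‖ < ε' := by rw [← dist_eq_norm]; exact hbd
    calc ‖Θ (G - b)‖ ≤ cB * ‖G - b‖ := hΘle _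
      _ ≤ (cB + 1) * ‖G - b‖ := by nlinarith [norm_nonneg (G - b)]
      _ < (cB + 1) * ε' := mul_lt_mul_of_pos_left hb1 (by linarith)
      _ = ε / 2 := by
          rw [hε'def, mul_comm]
          exact div_mul_cancel₀ _ ((by linarith : (0:ℝ) < cB + 1).ne')
  calc dist f (Θ b) ≤ dist f (Θ G) + dist (Θ G) (Θ b) := dist_triangle _ _ _
    _ < ε := by linarith
end

section
/- Let A ∈ ℂⁿˣⁿ admit a factorization A = U D Uᵀ where U is a real orthogonal n×n matrix and D is a complex diagonal matrix, and suppose the real part Re(A) is invertible. Let K ⊂ ℝⁿ be compact. Then there exists a lattice Λ ⊂ ℝⁿ such that the complex linear span of the family of functions {t ↦ exp(t·Aλ) : λ ∈ Λ} is dense in the space C(K) of continuous complex-valued functions on K with the supremum norm. -/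
open Matrix

section AuxEntire

lemma aux_factor_one {f : ℂ → ℂ} (hf : Differentiable ℂ f) {a : ℂ} (ha : f a = 0) :
    ∃ g : ℂ → ℂ, Differentiable ℂ g ∧ ∀ z, f z = (z - a) * g z := by
  refine ⟨dslope f a, ?_, ?_⟩
  · intro b
    rcases eq_or_ne b a with rfl | hb
    · obtain ⟨p, hp⟩ := hf.analyticAt b
      exact hp.has_fpower_series_dslope_fslope.analyticAt.differentiableAt
    · exact (differentiableAt_dslope_of_ne hb).mpr (hf b)
  · intro z
    rcases eq_or_ne z a with rfl | hz
    · simp [ha]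
    · rw [dslope_of_ne f hz, slope_def_field, ha, sub_zero]
      rw [mul_div_assoc']
      rw [mul_comm, mul_div_assoc, div_self (sub_ne_zero.mpr hz), mul_one]

lemma aux_factor_finset (s : Finset ℤ) :
    ∀ f : ℂ → ℂ, Differentiable ℂ f → (∀ k ∈ s, f (k : ℂ) = 0) →
      ∃ g : ℂ → ℂ, Differentiable ℂ g ∧ ∀ z, f z = (∏ k ∈ s, (z - (k : ℂ))) * g z := by
  classical
  induction s using Finset.induction_on with
  | empty => exact fun f hf _ => ⟨f, hf, by simp⟩
  | @insert a s ha ih =>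
    intro f hf h0
    obtain ⟨g, hg, hfg⟩ := ih f hf (fun k hk => h0 k (Finset.mem_insert_of_mem hk))
    have hprod : (∏ k ∈ s, ((a : ℂ) - (k : ℂ))) ≠ 0 := by
      rw [Finset.prod_ne_zero_iff]
      intro k hk
      have : a ≠ k := by rintro rfl; exact ha hk
      intro h
      exact this (by exact_mod_cast sub_eq_zero.mp h)
    have hga : g (a : ℂ) = 0 := by
      have := h0 a (Finset.mem_insert_self a s)
      rw [hfg] at this
      exact (mul_eq_zero.mp this).resolve_left hprod
    obtain ⟨h, hh, hgh⟩ := aux_factor_one hg hga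
    refine ⟨h, hh, fun z => ?_⟩
    rw [Finset.prod_insert ha, hfg, hgh]
    ring

open Filter in
lemma aux_entire_zero (f : ℂ → ℂ) (hf : Differentiable ℂ f) (C : ℝ)
    (hb : ∀ z, ‖f z‖ ≤ C * Real.exp (‖z‖ / 10)) (hz : ∀ k : ℤ, f (k : ℂ) = 0) (z₀ : ℂ) :
    f z₀ = 0 := by
  classical
  have hC : 0 ≤ C := le_trans (norm_nonneg (f 0)) (by simpa using hb 0)
  have key : ∀ N : ℕ, 1 ≤ N → ‖z₀‖ ≤ N →
      ‖f z₀‖ ≤ C * Real.exp N * ((2:ℝ)/9)^(2*N+1) := by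
    intro N hN1 hNz
    have hNR : (1:ℝ) ≤ (N:ℝ) := by exact_mod_cast hN1
    set s : Finset ℤ := Finset.Icc (-(N:ℤ)) (N:ℤ) with hs
    have hcard : s.card = 2*N+1 := by
      rw [hs, Int.card_Icc]; omega
    obtain ⟨g, hg, hfg⟩ := aux_factor_finset s f hf (fun k _ => hz k)
    set R : ℝ := 10 * N with hRdef
    have hR : (0:ℝ) < R := by positivity
    have hgb : ∀ w ∈ Metric.sphere (0:ℂ) R, ‖g w‖ ≤ C * Real.exp N / (9*N)^(2*N+1) := by
      intro w hw
      have hwn : ‖w‖ = R := by simpa [Complex.dist_eq, sub_zero] using hw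
      have hfw : ‖f w‖ ≤ C * Real.exp N := by
        have h := hb w
        rw [hwn] at h
        have : R / 10 = (N:ℝ) := by rw [hRdef]; ring
        rwa [this] at h
      have hPw : ((9*(N:ℝ)))^(2*N+1) ≤ ‖∏ k ∈ s, (w - (k:ℂ))‖ := by
        rw [norm_prod]
        calc ((9*(N:ℝ)))^(2*N+1) = ∏ _k ∈ s, (9*(N:ℝ)) := by
              rw [Finset.prod_const, hcard]
          _ ≤ ∏ k ∈ s, ‖w - (k:ℂ)‖ := by
              refine Finset.prod_le_prod (fun _ _ => by positivity) (fun k hk => ?_)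
              obtain ⟨hk1, hk2⟩ := Finset.mem_Icc.mp hk
              have hkn : ‖((k:ℤ):ℂ)‖ ≤ (N:ℝ) := by
                rw [Complex.norm_intCast]
                rw [abs_le]
                constructor <;> [exact_mod_cast hk1; exact_mod_cast hk2]
              have h1 : ‖w‖ - ‖((k:ℤ):ℂ)‖ ≤ ‖w - ((k:ℤ):ℂ)‖ := norm_sub_norm_le _ _
              rw [hwn] at h1
              have : 9*(N:ℝ) ≤ R - ‖((k:ℤ):ℂ)‖ := by rw [hRdef]; linarith
              linarith
      have hfw2 : ‖f w‖ = ‖∏ k ∈ s, (w - (k:ℂ))‖ * ‖g w‖ := by rw [hfg w, norm_mul]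
      have hpos : (0:ℝ) < (9*(N:ℝ))^(2*N+1) := by positivity
      have hPpos : 0 < ‖∏ k ∈ s, (w - (k:ℂ))‖ := lt_of_lt_of_le hpos hPw
      have hgw : ‖g w‖ = ‖f w‖ / ‖∏ k ∈ s, (w - (k:ℂ))‖ := by
        rw [hfw2, mul_div_cancel_left₀ _ (ne_of_gt hPpos)]
      rw [hgw]
      exact div_le_div₀ (mul_nonneg hC (Real.exp_pos _).le) hfw hpos hPw
    have hmm : ‖g z₀‖ ≤ C * Real.exp N / (9*N)^(2*N+1) := by
      have h3 : z₀ ∈ closure (Metric.ball (0:ℂ) R) := by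
        rw [closure_ball (0:ℂ) (ne_of_gt hR)]
        rw [Metric.mem_closedBall, Complex.dist_eq, sub_zero]
        calc ‖z₀‖ = ‖z₀‖ := rfl
          _ ≤ (N:ℝ) := hNz
          _ ≤ R := by rw [hRdef]; nlinarith
      refine Complex.norm_le_of_forall_mem_frontier_norm_le Metric.isBounded_ball
        hg.diffContOnCl ?_ h3
      rw [frontier_ball (0:ℂ) (ne_of_gt hR)]
      exact hgb
    have hPz : ‖∏ k ∈ s, (z₀ - (k:ℂ))‖ ≤ (2*(N:ℝ))^(2*N+1) := by
      rw [norm_prod]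
      calc ∏ k ∈ s, ‖z₀ - (k:ℂ)‖ ≤ ∏ _k ∈ s, (2*(N:ℝ)) := by
            refine Finset.prod_le_prod (fun _ _ => norm_nonneg _) (fun k hk => ?_)
            obtain ⟨hk1, hk2⟩ := Finset.mem_Icc.mp hk
            have hkn : ‖((k:ℤ):ℂ)‖ ≤ (N:ℝ) := by
              rw [Complex.norm_intCast, abs_le]
              constructor <;> [exact_mod_cast hk1; exact_mod_cast hk2]
            calc ‖z₀ - ((k:ℤ):ℂ)‖ ≤ ‖z₀‖ + ‖((k:ℤ):ℂ)‖ := norm_sub_le _ _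
              _ ≤ 2*(N:ℝ) := by linarith
        _ = (2*(N:ℝ))^(2*N+1) := by rw [Finset.prod_const, hcard]
    have hfinal : ‖f z₀‖ ≤ (2*(N:ℝ))^(2*N+1) * (C * Real.exp N / (9*N)^(2*N+1)) := by
      calc ‖f z₀‖ = ‖∏ k ∈ s, (z₀ - (k:ℂ))‖ * ‖g z₀‖ := by rw [hfg, norm_mul]
        _ ≤ (2*(N:ℝ))^(2*N+1) * (C * Real.exp N / (9*N)^(2*N+1)) :=
            mul_le_mul hPz hmm (norm_nonneg _) (by positivity)
    have heq : (2*(N:ℝ))^(2*N+1) * (C * Real.exp N / (9*N)^(2*N+1))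
        = C * Real.exp N * ((2:ℝ)/9)^(2*N+1) := by
      have hratio : (2*(N:ℝ))^(2*N+1) / (9*(N:ℝ))^(2*N+1) = ((2:ℝ)/9)^(2*N+1) := by
        rw [← div_pow]
        congr 1
        rw [mul_div_mul_right]
        exact ne_of_gt (by positivity)
      rw [mul_comm, div_mul_eq_mul_div, mul_div_assoc, hratio]
    rw [heq] at hfinal
    exact hfinal
  have hlim : Tendsto (fun N : ℕ => C * Real.exp N * ((2:ℝ)/9)^(2*N+1)) atTop (nhds 0) := by
    have hcong : ∀ N : ℕ, C * Real.exp N * ((2:ℝ)/9)^(2*N+1)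
        = (C * (2/9)) * (Real.exp 1 * ((4:ℝ)/81))^N := by
      intro N
      have e1 : Real.exp (N:ℝ) = (Real.exp 1)^N := by
        rw [← Real.exp_nat_mul, mul_one]
      have e2 : ((2:ℝ)/9)^(2*N+1) = (2/9) * (((4:ℝ)/81))^N := by
        rw [pow_succ, pow_mul]
        norm_num [mul_comm]
      rw [e1, e2, mul_pow]
      ring
    have h0 : Tendsto (fun N : ℕ => (Real.exp 1 * ((4:ℝ)/81))^N) atTop (nhds 0) := by
      refine tendsto_pow_atTop_nhds_zero_of_lt_one (by positivity) ?_
      nlinarith [Real.exp_one_lt_d9]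
    have := h0.const_mul (C * (2/9))
    rw [mul_zero] at this
    exact this.congr (fun N => (hcong N).symm)
  have hev : ∀ᶠ N : ℕ in atTop, ‖f z₀‖ ≤ C * Real.exp N * ((2:ℝ)/9)^(2*N+1) := by
    filter_upwards [eventually_ge_atTop (max 1 ⌈‖z₀‖⌉₊)] with N hN
    refine key N (le_trans (le_max_left _ _) hN) ?_
    calc ‖z₀‖ ≤ (⌈‖z₀‖⌉₊ : ℝ) := Nat.le_ceil _
      _ ≤ (N:ℝ) := by exact_mod_cast le_trans (le_max_right _ _) hN
  have := ge_of_tendsto hlim hev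
  exact norm_le_zero_iff.mp this

end AuxEntire

section AuxDense

lemma aux_dense_span {F : Type*} [NormedAddCommGroup F] [NormedSpace ℂ F]
    (S : Set F) (h : ∀ L : F →L[ℂ] ℂ, (∀ g ∈ S, L g = 0) → L = 0) :
    Dense ((Submodule.span ℂ S : Submodule ℂ F) : Set F) := by
  rw [dense_iff_closure_eq]
  by_contra hd
  obtain ⟨x, hx⟩ := (Set.ne_univ_iff_exists_notMem _).mp hd
  have hconv : Convex ℝ (closure ((Submodule.span ℂ S : Submodule ℂ F) : Set F)) := by
    have h1 : Convex ℝ (((Submodule.span ℂ S).restrictScalars ℝ : Submodule ℝ F) : Set F) :=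
      ((Submodule.span ℂ S).restrictScalars ℝ).convex
    exact h1.closure
  obtain ⟨f, c, hfx, hfy⟩ := geometric_hahn_banach_point_closed hconv isClosed_closure hx
  have hf0 : ∀ y ∈ Submodule.span ℂ S, f y = 0 := by
    intro y hy
    by_contra hne
    have hmem : ((c-1)/(f y) : ℝ) • y ∈ Submodule.span ℂ S := by
      have := Submodule.smul_mem (Submodule.span ℂ S) ((((c-1)/(f y) : ℝ)) : ℂ) hy
      rwa [Complex.coe_smul] at this
    have hgt := hfy _ (subset_closure hmem)
    rw [_root_.map_smul, smul_eq_mul, div_mul_cancel₀ _ hne] at hgt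
    linarith
  have hc0 : c < 0 := by simpa using hfy 0 (subset_closure (Submodule.zero_mem _))
  set g : F →L[ℂ] ℂ := StrongDual.extendRCLike f with hgdef
  have hgS : ∀ s ∈ S, g s = 0 := by
    intro s hs
    rw [hgdef, ContinuousLinearMap.extendTo𝕜'_apply]
    rw [hf0 s (Submodule.subset_span hs),
      hf0 _ (Submodule.smul_mem _ (RCLike.I : ℂ) (Submodule.subset_span hs))]
    simp
  have hg0 : g = 0 := h g hgS
  have hre : (g x).re = f x := by
    rw [hgdef, ContinuousLinearMap.extendTo𝕜'_apply]
    simp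
  rw [hg0] at hre
  simp at hre
  linarith

end AuxDense

section AuxExp

lemma aux_exp_apply {X : Type*} [TopologicalSpace X] [CompactSpace X] (h : C(X, ℂ)) (t : X) :
    (NormedSpace.exp h) t = Complex.exp (h t) := by
  have hmap := NormedSpace.map_exp (ContinuousMap.evalAlgHom ℂ ℂ t)
    (ContinuousEvalConst.continuous_eval_const t) h
  simpa [Complex.exp_eq_exp_ℂ] using hmap

lemma aux_norm_exp_le {X : Type*} [TopologicalSpace X] [CompactSpace X] (h : C(X, ℂ)) :
    ‖NormedSpace.exp h‖ ≤ Real.exp ‖h‖ := by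
  rw [ContinuousMap.norm_le _ (Real.exp_nonneg _)]
  intro t
  rw [aux_exp_apply]
  have h1 : ‖Complex.exp (h t)‖ = Real.exp ((h t).re) := by
    rw [Complex.norm_exp]
  rw [h1]
  exact Real.exp_le_exp.mpr (le_trans (Complex.re_le_norm _) (h.norm_coe_le_norm t))

end AuxExp

lemma aux_map_mul_real {n : ℕ} (P Q : Matrix (Fin n) (Fin n) ℝ) :
    (P * Q).map Complex.ofReal = P.map Complex.ofReal * Q.map Complex.ofReal := by
  ext i j
  simp only [Matrix.map_apply, Matrix.mul_apply]
  push_cast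
  rfl

set_option maxHeartbeats 1000000

/-- Lemma 5.6 (`C(K)` version): if `A = U D Uᵀ` with `U` real orthogonal and `D`
complex diagonal, and `Re(A)` is invertible, then there is a lattice `Λ ⊂ ℝⁿ`
such that the span of `t ↦ exp(t·Aλ)`, `λ ∈ Λ`, is dense in `C(K, ℂ)`. -/
theorem diagonal_complex_density_nonsingular_continuousMap
    (n : ℕ) (A : Matrix (Fin n) (Fin n) ℂ)
    (U : Matrix (Fin n) (Fin n) ℝ) (hU : Uᵀ * U = 1)
    (D : Matrix (Fin n) (Fin n) ℂ) (hD : D.IsDiag)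
    (hA : A = U.map Complex.ofReal * D * (U.map Complex.ofReal)ᵀ)
    (hRe : IsUnit (A.map Complex.re))
    (K : Set (Fin n → ℝ)) (hK : IsCompact K) :
    ∃ Λ : Set (Fin n → ℝ), IsLattice n Λ ∧
      Dense (↑(Submodule.span ℂ
          {g : C(K, ℂ) | ∃ lam ∈ Λ, ∀ t : K,
            g t = Complex.exp ((fun i => (((t : Fin n → ℝ) i : ℝ) : ℂ)) ⬝ᵥ
              A.mulVec fun i => ((lam i : ℝ) : ℂ))})
        : Set C(K, ℂ)) := by
  classical
  haveI : CompactSpace K := isCompact_iff_compactSpace.mp hK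
  -- the diagonal entries have nonzero real part
  have hUU' : U * Uᵀ = 1 := mul_eq_one_comm.mp hU
  have hdetU : IsUnit U.det := by
    have h1 : U.det * U.det = 1 := by
      have h2 := congrArg Matrix.det hU
      rwa [Matrix.det_mul, Matrix.det_transpose, Matrix.det_one] at h2
    exact IsUnit.of_mul_eq_one _ h1
  have hmap : A.map Complex.re = U * (D.map Complex.re) * Uᵀ := by
    rw [hA]
    ext i k
    simp only [Matrix.map_apply, Matrix.mul_apply, Matrix.transpose_apply, Finset.sum_mul]
    rw [Complex.re_sum]
    refine Finset.sum_congr rfl fun b _ => ?_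
    rw [Complex.re_sum]
    refine Finset.sum_congr rfl fun a _ => ?_
    simp only [Complex.mul_re, Complex.ofReal_re, Complex.ofReal_im]
    ring
  have hre : ∀ j, (D j j).re ≠ 0 := by
    have hDd : (D.map Complex.re) = Matrix.diagonal (fun j => (D j j).re) := by
      have h1 := (hD.map (show Complex.re 0 = 0 by simp)).diagonal_diag
      rw [← h1]
      rfl
    have h2 := hRe
    rw [hmap, Matrix.isUnit_iff_isUnit_det, Matrix.det_mul, Matrix.det_mul,
      Matrix.det_transpose, hDd, Matrix.det_diagonal] at h2
    have h3 : IsUnit (∏ j, (D j j).re) := by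
      have h4 := isUnit_of_mul_isUnit_left h2
      exact isUnit_of_mul_isUnit_right h4
    intro j hj
    exact (isUnit_iff_ne_zero.mp h3) (Finset.prod_eq_zero (Finset.mem_univ j) hj)
  have hd0 : ∀ j, D j j ≠ 0 := fun j h => hre j (by rw [h]; simp)
  -- coordinate functions
  set sR : Fin n → C(K, ℝ) := fun j =>
    ⟨fun t => Uᵀ.mulVec (t : Fin n → ℝ) j, by
      simp only [Matrix.mulVec, dotProduct]
      exact continuous_finset_sum _ fun i _ =>
        continuous_const.mul ((continuous_apply i).comp continuous_subtype_val)⟩ with hsRdef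
  set bC : Fin n → C(K, ℂ) := fun j =>
    ⟨fun t => D j j * ((sR j t : ℝ) : ℂ),
      continuous_const.mul (Complex.continuous_ofReal.comp (sR j).continuous)⟩ with hbCdef
  set ε : Fin n → ℝ := fun j => (10 * (‖bC j‖ + 1))⁻¹ with hεdef
  have hεpos : ∀ j, 0 < ε j := by
    intro j
    have h1 : (0:ℝ) < (10 * (‖bC j‖ + 1))⁻¹ := by positivity
    simpa [hεdef] using h1
  set c : Fin n → C(K, ℂ) := fun j => ((ε j : ℝ) : ℂ) • bC j with hcdef
  have hcnorm : ∀ j, ‖c j‖ ≤ 1/10 := by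
    intro j
    have h2 : c j = ((ε j : ℝ) : ℂ) • bC j := by rw [hcdef]
    rw [h2]
    simp only [norm_smul, Complex.norm_real, Real.norm_eq_abs]
    rw [abs_of_pos (hεpos j)]
    have h3 : ε j = (10 * (‖bC j‖ + 1))⁻¹ := by rw [hεdef]
    rw [h3]
    have hB : (0:ℝ) ≤ ‖bC j‖ := norm_nonneg _
    have h10 : (0:ℝ) < 10 * (‖bC j‖ + 1) := by positivity
    rw [inv_eq_one_div, div_mul_eq_mul_div, one_mul, div_le_div_iff₀ h10 (by norm_num : (0:ℝ) < 10)]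
    nlinarith
  have hcval : ∀ j (t : K), (c j) t = (ε j : ℂ) * (D j j * ((Uᵀ.mulVec (t : Fin n → ℝ) j : ℝ) : ℂ)) := by
    intro j t
    have h2 : c j = ((ε j : ℝ) : ℂ) • bC j := by rw [hcdef]
    rw [h2]
    rfl
  -- the lattice matrix
  set M : Matrix (Fin n) (Fin n) ℝ := U * Matrix.diagonal ε with hMdef
  have hMunit : IsUnit M := by
    rw [hMdef, Matrix.isUnit_iff_isUnit_det, Matrix.det_mul, Matrix.det_diagonal]
    exact hdetU.mul (isUnit_iff_ne_zero.mpr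
      (Finset.prod_ne_zero_iff.mpr fun j _ => ne_of_gt (hεpos j)))
  refine ⟨{x | ∃ k : Fin n → ℤ, x = M.mulVec fun i => (k i : ℝ)}, ⟨M, hMunit, rfl⟩, ?_⟩
  -- the family of exponentials indexed by z ∈ ℂⁿ
  set E : (Fin n → ℂ) → C(K, ℂ) := fun z => NormedSpace.exp (∑ j, z j • c j) with hEdef
  have hEapply : ∀ (z : Fin n → ℂ) (t : K),
      E z t = Complex.exp (∑ j, z j * (c j t)) := by
    intro z t
    rw [hEdef, aux_exp_apply]
    congr 1
    rw [ContinuousMap.sum_apply]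
    exact Finset.sum_congr rfl fun j _ => rfl
  -- main matrix identity
  have hexp_eq : ∀ (t : K) (k : Fin n → ℤ),
      ((fun i => (((t : Fin n → ℝ) i : ℝ) : ℂ)) ⬝ᵥ
        A.mulVec fun i => (((M.mulVec fun i => ((k i : ℤ) : ℝ)) i : ℝ) : ℂ))
      = ∑ j, ((k j : ℤ) : ℂ) * (c j t) := by
    intro t k
    have hcast : (fun i => (((M.mulVec fun i => ((k i : ℤ) : ℝ)) i : ℝ) : ℂ))
        = (M.map Complex.ofReal).mulVec (fun i => ((k i : ℤ) : ℂ)) := by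
      funext i
      have h1 := RingHom.map_mulVec Complex.ofRealHom M (fun i => ((k i : ℤ) : ℝ)) i
      simpa [show (⇑Complex.ofRealHom : ℝ → ℂ) = Complex.ofReal from rfl, Function.comp_def] using h1
    rw [hcast, hA]
    have hMc : M.map Complex.ofReal
        = U.map Complex.ofReal * Matrix.diagonal (fun j => ((ε j : ℝ) : ℂ)) := by
      rw [hMdef]
      rw [aux_map_mul_real, Matrix.diagonal_map (by simp : (Complex.ofReal 0) = 0)]
    rw [Matrix.mulVec_mulVec, hMc]
    have hassoc : U.map Complex.ofReal * D * (U.map Complex.ofReal)ᵀ *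
        (U.map Complex.ofReal * Matrix.diagonal (fun j => ((ε j : ℝ) : ℂ)))
        = U.map Complex.ofReal * (D * Matrix.diagonal (fun j => ((ε j : ℝ) : ℂ))) := by
      have hUcU : (U.map Complex.ofReal)ᵀ * U.map Complex.ofReal = 1 := by
        rw [← Matrix.transpose_map, ← aux_map_mul_real, hU]
        exact Matrix.map_one _ (by simp) (by simp)
      simp only [Matrix.mul_assoc]
      rw [← Matrix.mul_assoc ((U.map Complex.ofReal)ᵀ) (U.map Complex.ofReal), hUcU,
        Matrix.one_mul]
    rw [hassoc]
    -- now pass to sums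
    rw [Matrix.dotProduct_mulVec, ← Matrix.vecMul_vecMul]
    have hvec : (fun i => (((t : Fin n → ℝ) i : ℝ) : ℂ)) ᵥ* U.map Complex.ofReal
        = fun j => ((Uᵀ.mulVec (t : Fin n → ℝ) j : ℝ) : ℂ) := by
      funext j
      have h1 := RingHom.map_vecMul Complex.ofRealHom U (fun i => ((t : Fin n → ℝ) i)) j
      have h2 : Uᵀ.mulVec (t : Fin n → ℝ) = (t : Fin n → ℝ) ᵥ* U := Matrix.mulVec_transpose U _
      rw [h2]
      simpa [Function.comp_def, show (⇑Complex.ofRealHom : ℝ → ℂ) = Complex.ofReal from rfl] using h1.symm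
    rw [hvec]
    have hDdiag : D = Matrix.diagonal (fun j => D j j) := hD.diagonal_diag.symm
    rw [hDdiag, Matrix.diagonal_mul_diagonal]
    simp only [dotProduct, Matrix.vecMul_diagonal]
    refine Finset.sum_congr rfl fun j _ => ?_
    rw [hcval]
    ring
  -- density via the dual criterion
  apply aux_dense_span
  intro L hL
  -- the integer lattice points kill L
  have hbase : ∀ k : Fin n → ℤ, L (E fun j => ((k j : ℤ) : ℂ)) = 0 := by
    intro k
    refine hL _ ⟨M.mulVec fun i => ((k i : ℤ) : ℝ), ⟨k, rfl⟩, fun t => ?_⟩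
    rw [hEapply, hexp_eq t k]
  -- Carlson-type induction over the coordinates
  have hmain : ∀ m : ℕ, ∀ z : Fin n → ℂ,
      (∀ j : Fin n, m ≤ (j : ℕ) → ∃ k : ℤ, z j = (k : ℂ)) → L (E z) = 0 := by
    intro m
    induction m with
    | zero =>
      intro z hz
      choose k hk using fun j => hz j (Nat.zero_le _)
      have hzk : z = fun j => ((k j : ℤ) : ℂ) := funext hk
      rw [hzk]
      exact hbase k
    | succ m ih =>
      intro z hz
      by_cases hmn : m < n
      · set jm : Fin n := ⟨m, hmn⟩ with hjm
        set φ : C(K, ℂ) := c jm with hφ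
        set ψ : C(K, ℂ) := ∑ j ∈ Finset.univ.erase jm, z j • c j with hψ
        have hsplit : ∀ ζ : ℂ, (∑ j, (Function.update z jm ζ) j • c j) = ζ • φ + ψ := by
          intro ζ
          rw [hψ, hφ]
          rw [← Finset.add_sum_erase _ _ (Finset.mem_univ jm)]
          congr 1
          · rw [Function.update_self]
          · refine Finset.sum_congr rfl fun j hj => ?_
            rw [Function.update_of_ne (Finset.ne_of_mem_erase hj)]
        have hfE : ∀ ζ : ℂ, L (E (Function.update z jm ζ))
            = L (NormedSpace.exp (ζ • φ + ψ)) := by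
          intro ζ
          simp only [hEdef]
          rw [hsplit]
        have hdiff : Differentiable ℂ (fun ζ : ℂ => L (NormedSpace.exp (ζ • φ + ψ))) := by
          have h1 : (fun ζ : ℂ => L (NormedSpace.exp (ζ • φ + ψ)))
              = fun ζ : ℂ => L (NormedSpace.exp (ζ • φ) * NormedSpace.exp ψ) := by
            funext ζ
            rw [NormedSpace.exp_add]
          rw [h1]
          have h2 : Differentiable ℂ fun ζ : ℂ => NormedSpace.exp (ζ • φ) :=
            fun ζ => (hasDerivAt_exp_smul_const (𝕂 := ℂ) φ ζ).differentiableAt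
          exact L.differentiable.comp (h2.mul_const _)
        have hbound : ∀ ζ : ℂ, ‖L (NormedSpace.exp (ζ • φ + ψ))‖
            ≤ (‖L‖ * Real.exp ‖ψ‖) * Real.exp (‖ζ‖ / 10) := by
          intro ζ
          calc ‖L (NormedSpace.exp (ζ • φ + ψ))‖
              ≤ ‖L‖ * ‖NormedSpace.exp (ζ • φ + ψ)‖ := L.le_opNorm _
            _ ≤ ‖L‖ * Real.exp ‖ζ • φ + ψ‖ :=
                mul_le_mul_of_nonneg_left (aux_norm_exp_le _) (norm_nonneg _)
            _ ≤ ‖L‖ * Real.exp (‖ζ‖ / 10 + ‖ψ‖) := by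
                refine mul_le_mul_of_nonneg_left (Real.exp_le_exp.mpr ?_) (norm_nonneg _)
                calc ‖ζ • φ + ψ‖ ≤ ‖ζ • φ‖ + ‖ψ‖ := norm_add_le _ _
                  _ ≤ ‖ζ‖ / 10 + ‖ψ‖ := by
                      rw [norm_smul]
                      have h5 : ‖φ‖ ≤ 1/10 := by rw [hφ]; exact hcnorm jm
                      have h6 : ‖ζ‖ * ‖φ‖ ≤ ‖ζ‖ * (1/10) :=
                        mul_le_mul_of_nonneg_left h5 (norm_nonneg ζ)
                      linarith
            _ = (‖L‖ * Real.exp ‖ψ‖) * Real.exp (‖ζ‖ / 10) := by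
                rw [Real.exp_add]
                ring
        have hints : ∀ kk : ℤ, (fun ζ : ℂ => L (NormedSpace.exp (ζ • φ + ψ))) (kk : ℂ) = 0 := by
          intro kk
          simp only
          rw [← hfE (kk : ℂ)]
          apply ih
          intro j hj
          rcases eq_or_ne j jm with rfl | hne
          · exact ⟨kk, by rw [Function.update_self]⟩
          · rw [Function.update_of_ne hne]
            refine hz j ?_
            have h6 : (j : ℕ) ≠ m := by
              intro hc
              exact hne (Fin.ext (by rw [hc, hjm]))
            omega
        have hzero := aux_entire_zero _ hdiff (‖L‖ * Real.exp ‖ψ‖) hbound hints (z jm)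
        calc L (E z) = L (E (Function.update z jm (z jm))) := by rw [Function.update_eq_self]
          _ = L (NormedSpace.exp ((z jm) • φ + ψ)) := hfE (z jm)
          _ = 0 := hzero
      · apply ih
        intro j hj
        exact absurd j.isLt (by omega)
  have hall : ∀ z : Fin n → ℂ, L (E z) = 0 := fun z =>
    hmain n z (fun j hj => absurd j.isLt (by omega))
  -- the characters
  set ch : (Fin n → ℝ) → C(K, ℂ) := fun w =>
    ⟨fun t => Complex.exp (Complex.I * ((w ⬝ᵥ (t : Fin n → ℝ) : ℝ) : ℂ)),
      Complex.continuous_exp.comp (continuous_const.mul (Complex.continuous_ofReal.comp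
        (by
          simp only [dotProduct]
          exact continuous_finset_sum _ fun i _ =>
            continuous_const.mul ((continuous_apply i).comp continuous_subtype_val))))⟩
    with hchdef
  have hch_apply : ∀ w t, ch w t = Complex.exp (Complex.I * ((w ⬝ᵥ (t : Fin n → ℝ) : ℝ) : ℂ)) :=
    fun w t => rfl
  have horth : ∀ (v : Fin n → ℝ) (t : K),
      (Uᵀ.mulVec v) ⬝ᵥ (Uᵀ.mulVec (t : Fin n → ℝ)) = v ⬝ᵥ (t : Fin n → ℝ) := by
    intro v t
    rw [Matrix.dotProduct_mulVec, Matrix.vecMul_transpose, Matrix.mulVec_mulVec, hUU',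
      Matrix.one_mulVec]
  have hLch : ∀ w : Fin n → ℝ, L (ch w) = 0 := by
    intro w
    have hzw : ch w = E (fun j =>
        (Complex.I * ((Uᵀ.mulVec w j : ℝ) : ℂ)) / (((ε j : ℝ) : ℂ) * D j j)) := by
      apply ContinuousMap.ext
      intro t
      rw [hch_apply, hEapply]
      congr 1
      have hterm : ∀ j : Fin n,
          (Complex.I * ((Uᵀ.mulVec w j : ℝ) : ℂ)) / (((ε j : ℝ) : ℂ) * D j j) * (c j t)
          = Complex.I * (((Uᵀ.mulVec w j : ℝ) : ℂ) * ((Uᵀ.mulVec (t : Fin n → ℝ) j : ℝ) : ℂ)) := by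
        intro j
        rw [hcval]
        have hε : (((ε j : ℝ)) : ℂ) ≠ 0 := by
          exact_mod_cast ne_of_gt (hεpos j)
        have hb : (((ε j : ℝ) : ℂ) * D j j) ≠ 0 := mul_ne_zero hε (hd0 j)
        have h7 : ((ε j : ℝ) : ℂ) * (D j j * ((Uᵀ.mulVec (t : Fin n → ℝ) j : ℝ) : ℂ))
            = (((ε j : ℝ) : ℂ) * D j j) * ((Uᵀ.mulVec (t : Fin n → ℝ) j : ℝ) : ℂ) := by ring
        rw [h7, div_mul_eq_mul_div, mul_div_assoc,
          mul_div_cancel_left₀ _ hb]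
        ring
      rw [Finset.sum_congr rfl fun j _ => hterm j]
      rw [← Finset.mul_sum]
      congr 1
      rw [← horth w t]
      simp only [dotProduct]
      push_cast
      rfl
    rw [hzw]
    exact hall _
  -- the characters span a star subalgebra that separates points
  have hchmul : ∀ w w', ch w * ch w' = ch (w + w') := by
    intro w w'
    ext t
    simp only [ContinuousMap.mul_apply]
    rw [hch_apply, hch_apply, hch_apply, ← Complex.exp_add]
    congr 1
    rw [add_dotProduct]
    push_cast
    ring
  have hchone : ch 0 = 1 := by
    ext t
    rw [hch_apply]
    simp [zero_dotProduct]
  have hchstar : ∀ w, star (ch w) = ch (-w) := by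
    intro w
    ext t
    rw [ContinuousMap.star_apply, hch_apply, hch_apply]
    rw [Complex.star_def, ← Complex.exp_conj]
    congr 1
    rw [neg_dotProduct]
    simp only [_root_.map_mul, Complex.conj_I, Complex.conj_ofReal]
    push_cast
    ring
  set p : Submodule ℂ C(K, ℂ) := Submodule.span ℂ (Set.range ch) with hpdef
  have hone_mem : (1 : C(K, ℂ)) ∈ p := by
    rw [← hchone]; exact Submodule.subset_span ⟨0, rfl⟩
  have hmul_mem : ∀ x ∈ p, ∀ y ∈ p, x * y ∈ p := by
    intro x hx y hy
    have h1 : p * p ≤ p := by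
      rw [hpdef, Submodule.span_mul_span]
      apply Submodule.span_le.mpr
      rintro u hu
      obtain ⟨a, ha, b, hb, rfl⟩ := Set.mem_mul.mp hu
      obtain ⟨w, rfl⟩ := ha
      obtain ⟨w', rfl⟩ := hb
      exact Submodule.subset_span ⟨w + w', (hchmul w w').symm⟩
    exact h1 (Submodule.mul_mem_mul hx hy)
  have hstar_mem : ∀ x ∈ p, star x ∈ p := by
    intro x hx
    induction hx using Submodule.span_induction with
    | mem a ha =>
      obtain ⟨w, rfl⟩ := ha
      rw [hchstar]
      exact Submodule.subset_span ⟨-w, rfl⟩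
    | zero => simpa using p.zero_mem
    | add a b _ _ iha ihb => rw [star_add]; exact p.add_mem iha ihb
    | smul r a _ iha => rw [star_smul]; exact p.smul_mem _ iha
  set Alg : StarSubalgebra ℂ C(K, ℂ) :=
    { carrier := (p : Set C(K, ℂ))
      mul_mem' := fun {x y} hx hy => hmul_mem x hx y hy
      one_mem' := hone_mem
      add_mem' := fun {x y} hx hy => p.add_mem hx hy
      zero_mem' := p.zero_mem
      algebraMap_mem' := fun r => by
        have h1 : algebraMap ℂ C(K, ℂ) r = r • (1 : C(K, ℂ)) :=
          Algebra.algebraMap_eq_smul_one r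
        rw [h1]
        exact p.smul_mem r hone_mem
      star_mem' := fun {x} hx => hstar_mem x hx } with hAlgdef
  have hsep : Alg.SeparatesPoints := by
    intro x y hxy
    obtain ⟨j, hj⟩ : ∃ j, (x : Fin n → ℝ) j ≠ (y : Fin n → ℝ) j := by
      by_contra hcon
      push_neg at hcon
      exact hxy (Subtype.ext (funext hcon))
    set δ : ℝ := (x : Fin n → ℝ) j - (y : Fin n → ℝ) j with hδ
    have hδ0 : δ ≠ 0 := sub_ne_zero.mpr hj
    refine ⟨_, ⟨ch (Pi.single j (Real.pi / δ)), Submodule.subset_span ⟨_, rfl⟩, rfl⟩, ?_⟩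
    have hdot : ∀ v : Fin n → ℝ, (Pi.single j (Real.pi / δ)) ⬝ᵥ v = (Real.pi / δ) * v j := by
      intro v
      simp [dotProduct, Pi.single_apply, ite_mul, Finset.sum_ite_eq]
    intro heq
    have heq2 : (ch (Pi.single j (Real.pi / δ))) x = (ch (Pi.single j (Real.pi / δ))) y := heq
    rw [hch_apply, hch_apply, hdot, hdot] at heq2
    rw [Complex.exp_eq_exp_iff_exists_int] at heq2
    obtain ⟨mm, hmm⟩ := heq2
    have him := congrArg Complex.im hmm
    simp only [Complex.add_im, Complex.mul_im, Complex.I_re, Complex.I_im, Complex.ofReal_re,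
      Complex.ofReal_im, Complex.intCast_im, Complex.intCast_re, Complex.mul_re, Complex.re_ofNat,
      Complex.im_ofNat] at him
    have hπ := Real.pi_ne_zero
    have hval : Real.pi / δ * (x : Fin n → ℝ) j - Real.pi / δ * (y : Fin n → ℝ) j = Real.pi := by
      rw [← mul_sub, ← hδ]
      field_simp
    have h2m : (1 : ℝ) = 2 * (mm : ℝ) := by
      have : Real.pi = (mm : ℝ) * (2 * Real.pi) := by linarith
      have h3 : Real.pi * 1 = Real.pi * (2 * (mm : ℝ)) := by ring_nf; linarith [this]
      exact mul_left_cancel₀ hπ h3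
    have h2m' : (1 : ℤ) = 2 * mm := by exact_mod_cast h2m
    omega
  have htop := ContinuousMap.starSubalgebra_topologicalClosure_eq_top_of_separatesPoints Alg hsep
  have hLp : ∀ x ∈ p, L x = 0 := by
    intro x hx
    induction hx using Submodule.span_induction with
    | mem a ha =>
      obtain ⟨w, rfl⟩ := ha
      exact hLch w
    | zero => simp
    | add a b _ _ iha ihb => rw [map_add, iha, ihb, add_zero]
    | smul r a _ iha => rw [_root_.map_smul, iha, smul_zero]
  have huniv : closure (Alg : Set C(K, ℂ)) = Set.univ := by
    have h9 := congrArg (fun (S : StarSubalgebra ℂ C(K, ℂ)) => (S : Set C(K, ℂ))) htop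
    simpa [StarSubalgebra.topologicalClosure_coe] using h9
  have hclosed : IsClosed {x : C(K, ℂ) | L x = 0} :=
    isClosed_eq L.continuous continuous_const
  have hsub : (Alg : Set C(K, ℂ)) ⊆ {x : C(K, ℂ) | L x = 0} := fun x hx => hLp x hx
  have hcover : (Set.univ : Set C(K, ℂ)) ⊆ {x : C(K, ℂ) | L x = 0} := by
    rw [← huniv]
    exact closure_minimal hsub hclosed
  ext x
  exact hcover (Set.mem_univ x)
end

section
/- Every real symplectic matrix 𝒞 ∈ Sp(d,ℝ) admits a factorization 𝒞 = D_L · V_A · (V_B)ᵀ · V_C, i.e. there exist an invertible real d×d matrix L and real symmetric d×d matrices A, B, C such that 𝒞 equals the product of the block matrices D_L = [[L⁻¹, 0], [0, Lᵀ]], V_A = [[I, 0], [A, I]], (V_B)ᵀ = [[I, B], [0, I]], and V_C = [[I, 0], [C, I]]. -/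
/-!
Right multiplication by the symplectic shear `V_{t I}` turns the upper-left block `P` of `𝒞`
into `P + t Q`. Because `P Qᵀ` is symmetric, `(P + i Q) (P + i Q)ᴴ = P Pᵀ + Q Qᵀ`, which is
positive definite since `𝒞` is invertible; so `det (P + X Q)` is a nonzero polynomial and some
real `t` makes `P + t Q` invertible. A symplectic matrix with invertible upper-left block `K` and
lower-left block `R` equals `D_{K⁻¹} V_{Kᵀ R} (V_{K⁻¹ Q})ᵀ`, and `𝒞 = (𝒞 V_{t I}) V_{-t I}`.
-/

open Matrix Polynomial

section

variable {l : Type*} [Fintype l] [DecidableEq l]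

theorem Matrix.exists_isUnit_det_add_smul_of_det_map_ne_zero {K A : Type*} [Field K] [Infinite K]
    [CommRing A] [Algebra K A] {P Q : Matrix l l K} (x : A)
    (hx : (P.map (algebraMap K A) + x • Q.map (algebraMap K A)).det ≠ 0) :
    ∃ t : K, IsUnit (P + t • Q).det := by
  set p : K[X] := (P.map C + (X : K[X]) • Q.map C).det
  have hp : p ≠ 0 := by
    refine fun hp ↦ hx ?_
    have := congrArg (aeval x) hp
    rw [map_zero, AlgHom.map_det] at this
    convert this using 2
    ext i j
    simp [mul_comm x]
  obtain ⟨t, ht⟩ : ∃ t, p.eval t ≠ 0 := by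
    by_contra! h
    exact hp (zero_of_eval_zero _ h)
  refine ⟨t, isUnit_iff_ne_zero.2 ?_⟩
  convert ht using 1
  rw [← coe_evalRingHom, RingHom.map_det]
  congr 1
  ext i j
  simp [mul_comm t]

theorem Matrix.det_map_add_I_smul_map_ne_zero {P Q : Matrix l l ℝ} (hPQ : P * Qᵀ = Q * Pᵀ)
    (hG : IsUnit (P * Pᵀ + Q * Qᵀ).det) :
    (P.map (algebraMap ℝ ℂ) + Complex.I • Q.map (algebraMap ℝ ℂ)).det ≠ 0 := by
  set f := (algebraMap ℝ ℂ).mapMatrix (m := l)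
  have hf (M : Matrix l l ℝ) : f Mᵀ = (f M)ᵀ := rfl
  have hPQ' : f P * (f Q)ᵀ = f Q * (f P)ᵀ := by
    simpa only [map_mul, hf] using congrArg f hPQ
  have key : (f P + Complex.I • f Q) * (f P - Complex.I • f Q)ᵀ = f (P * Pᵀ + Q * Qᵀ) := by
    simp only [transpose_sub, transpose_smul, mul_sub, add_mul, smul_mul_assoc, mul_smul_comm,
      hPQ', map_add, map_mul, hf, smul_add, smul_smul, Complex.I_mul_I, neg_one_smul]
    abel
  intro h0
  change (f P + Complex.I • f Q).det = 0 at h0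
  have := congrArg det key
  rw [det_mul, h0, zero_mul, ← RingHom.map_det] at this
  exact hG.ne_zero (by simpa [f] using this.symm)

theorem Matrix.posDef_mul_transpose_add_mul_transpose {P Q U T : Matrix l l ℝ}
    (h : IsUnit (fromBlocks P Q U T)) : (P * Pᵀ + Q * Qᵀ).PosDef := by
  have := (PosDef.mul_conjTranspose_self _ (vecMul_injective_iff_isUnit.2 h)).submatrix
    Sum.inl_injective
  rwa [conjTranspose_eq_transpose_of_trivial, fromBlocks_transpose, fromBlocks_multiply] at this

end

namespace SymplecticGroup

variable {l R : Type*} [Fintype l] [DecidableEq l] [CommRing R]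

theorem mem_iff_transpose_mul_fromBlocks_mul {A : Matrix (l ⊕ l) (l ⊕ l) R} :
    A ∈ symplecticGroup l R ↔
      Aᵀ * fromBlocks 0 1 (-1) 0 * A = fromBlocks 0 1 (-1) 0 := by
  have hJ : (fromBlocks 0 1 (-1) 0 : Matrix (l ⊕ l) (l ⊕ l) R) = -J l R := by
    simp [J, fromBlocks_neg]
  rw [mem_iff', hJ, mul_neg, neg_mul, neg_inj]

theorem fromBlocks_one_zero_mem {C : Matrix l l R} (hC : C.IsSymm) :
    fromBlocks 1 0 C 1 ∈ symplecticGroup l R :=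
  fromBlocks_mem_iff.2 ⟨by simp [hC.eq], by simp, by simp⟩

variable {P Q U T : Matrix l l R}

theorem mul_transpose_comm_of_fromBlocks_mem (h : fromBlocks P Q U T ∈ symplecticGroup l R) :
    P * Qᵀ = Q * Pᵀ := by
  have := (fromBlocks_mem_iff.1 (fromBlocks_transpose P Q U T ▸ transpose_mem h)).1
  simpa using this

theorem exists_decomposition_of_isUnit_det (h : fromBlocks P Q U T ∈ symplecticGroup l R)
    (hP : IsUnit P.det) :
    ∃ L A B : Matrix l l R, IsUnit L ∧ A.IsSymm ∧ B.IsSymm ∧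
      fromBlocks P Q U T = fromBlocks L⁻¹ 0 0 Lᵀ * fromBlocks 1 0 A 1 * fromBlocks 1 B 0 1 := by
  obtain ⟨hPU, -, hPT⟩ := fromBlocks_mem_iff.1 h
  have hPt : IsUnit Pᵀ.det := by rwa [det_transpose]
  have hT : T = U * (P⁻¹ * Q) + Pᵀ⁻¹ :=
    calc T = Pᵀ⁻¹ * (Pᵀ * T) := (nonsing_inv_mul_cancel_left _ _ hPt).symm
      _ = Pᵀ⁻¹ * (Uᵀ * P * (P⁻¹ * Q) + 1) := by
        rw [mul_assoc Uᵀ, mul_nonsing_inv_cancel_left _ _ hP, eq_add_of_sub_eq' hPT]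
      _ = U * (P⁻¹ * Q) + Pᵀ⁻¹ := by
        rw [← hPU, mul_add, mul_one, mul_assoc Pᵀ, nonsing_inv_mul_cancel_left _ _ hPt]
  have hB : (P⁻¹ * Q).IsSymm :=
    calc (P⁻¹ * Q)ᵀ = P⁻¹ * (P * Qᵀ) * Pᵀ⁻¹ := by
          rw [transpose_mul, transpose_nonsing_inv, nonsing_inv_mul_cancel_left _ _ hP]
      _ = P⁻¹ * Q := by
          rw [mul_transpose_comm_of_fromBlocks_mem h, ← mul_assoc,
            mul_nonsing_inv_cancel_right _ _ hPt]
  refine ⟨P⁻¹, Pᵀ * U, P⁻¹ * Q, isUnit_nonsing_inv_iff.2 ((isUnit_iff_isUnit_det P).2 hP),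
    by rw [IsSymm, transpose_mul, transpose_transpose, hPU], hB, ?_⟩
  rw [nonsing_inv_nonsing_inv P hP, transpose_nonsing_inv, hT]
  simp [fromBlocks_multiply, nonsing_inv_mul_cancel_left _ _ hPt,
    mul_nonsing_inv_cancel_left _ _ hP]

theorem exists_isUnit_det_add_smul_of_fromBlocks_mem {P Q U T : Matrix l l ℝ}
    (h : fromBlocks P Q U T ∈ symplecticGroup l ℝ) : ∃ t : ℝ, IsUnit (P + t • Q).det := by
  have hG :=
    posDef_mul_transpose_add_mul_transpose ((isUnit_iff_isUnit_det _).2 (symplectic_det h))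
  exact exists_isUnit_det_add_smul_of_det_map_ne_zero Complex.I <|
    det_map_add_I_smul_map_ne_zero (mul_transpose_comm_of_fromBlocks_mem h)
      ((isUnit_iff_isUnit_det _).1 hG.isUnit)

end SymplecticGroup

/-- Lemma 5.8: every real symplectic matrix `𝒞 ∈ Sp(d, ℝ)` factors as
`𝒞 = D_L · V_A · (V_B)ᵀ · V_C` with `L` invertible and `A, B, C` symmetric. -/
theorem symplectic_decomposition
    (d : ℕ) (S : Matrix (Fin d ⊕ Fin d) (Fin d ⊕ Fin d) ℝ)
    (hS : Sᵀ * fromBlocks 0 1 (-1) 0 * S = fromBlocks 0 1 (-1) 0) :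
    ∃ (L A B C : Matrix (Fin d) (Fin d) ℝ),
      IsUnit L ∧ A.IsSymm ∧ B.IsSymm ∧ C.IsSymm ∧
      S = fromBlocks L⁻¹ 0 0 Lᵀ * fromBlocks 1 0 A 1 *
            fromBlocks 1 B 0 1 * fromBlocks 1 0 C 1 := by
  obtain ⟨P, Q, U, T, rfl⟩ : ∃ P Q U T, S = fromBlocks P Q U T :=
    ⟨_, _, _, _, (fromBlocks_toBlocks S).symm⟩
  have hSp := SymplecticGroup.mem_iff_transpose_mul_fromBlocks_mul.2 hS
  obtain ⟨t, ht⟩ := SymplecticGroup.exists_isUnit_det_add_smul_of_fromBlocks_mem hSp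
  have hshear : fromBlocks 1 0 (t • 1) 1 ∈ symplecticGroup (Fin d) ℝ :=
    SymplecticGroup.fromBlocks_one_zero_mem (isSymm_one.smul t)
  have hprod : fromBlocks P Q U T * fromBlocks 1 0 (t • 1) 1 =
      fromBlocks (P + t • Q) Q (U + t • T) T := by
    simp [fromBlocks_multiply]
  obtain ⟨L, A, B, hL, hA, hB, hfac⟩ :=
    SymplecticGroup.exists_decomposition_of_isUnit_det (hprod ▸ mul_mem hSp hshear) ht
  refine ⟨L, A, B, (-t) • 1, hL, hA, hB, isSymm_one.smul _, ?_⟩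
  rw [← hfac, ← hprod, mul_assoc, fromBlocks_multiply]
  simp
end

section
/- Let C be a real symmetric n×n matrix and set D = I_n − iC (a complex symmetric n×n matrix). Then D is invertible, the integral κ_D := ∫_{ℝⁿ} exp(−π t·Dt) dt is a nonzero complex number with |κ_D| = |det D|^{−1/2}, and for every b ∈ ℂⁿ, ∫_{ℝⁿ} exp(−π (t·Dt − 2 b·t)) dt = κ_D · exp(π b·D⁻¹b). -/
open Matrix MeasureTheory

/-- The multivariate complex Gaussian integral `∫_{ℝⁿ} exp(−π t·Dt) dt`
associated to a complex matrix `D`. -/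
noncomputable def gaussianIntegral (n : ℕ) (D : Matrix (Fin n) (Fin n) ℂ) : ℂ :=
  ∫ t : Fin n → ℝ, Complex.exp (-(Real.pi : ℂ) *
    ((fun i => ((t i : ℝ) : ℂ)) ⬝ᵥ D.mulVec fun i => ((t i : ℝ) : ℂ)))

lemma integral_comp_mulVec {n : ℕ} {O : Matrix (Fin n) (Fin n) ℝ} (hO : |O.det| = 1)
    (f : (Fin n → ℝ) → ℂ) :
    (∫ t : Fin n → ℝ, f (O *ᵥ t)) = ∫ t : Fin n → ℝ, f t := by
  have hdet : O.det ≠ 0 := by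
    intro h; rw [h] at hO; simp at hO
  have h1 : Matrix.toLin' O ∘ₗ Matrix.toLin' O⁻¹ = LinearMap.id := by
    rw [← Matrix.toLin'_mul, Matrix.mul_nonsing_inv _ (isUnit_iff_ne_zero.mpr hdet), Matrix.toLin'_one]
  have h2 : Matrix.toLin' O⁻¹ ∘ₗ Matrix.toLin' O = LinearMap.id := by
    rw [← Matrix.toLin'_mul, Matrix.nonsing_inv_mul _ (isUnit_iff_ne_zero.mpr hdet), Matrix.toLin'_one]
  let e : (Fin n → ℝ) ≃ₗ[ℝ] (Fin n → ℝ) :=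
    LinearEquiv.ofLinear (Matrix.toLin' O) (Matrix.toLin' O⁻¹) h1 h2
  have hmp : MeasurePreserving (⇑(Matrix.toLin' O)) volume volume :=
    ⟨(Matrix.toLin' O).continuous_of_finiteDimensional.measurable, by
      rw [Real.map_matrix_volume_pi_eq_smul_volume_pi hdet, abs_inv, hO]; simp⟩
  have hemb : MeasurableEmbedding (⇑(Matrix.toLin' O)) :=
    e.toContinuousLinearEquiv.toHomeomorph.measurableEmbedding
  have := hmp.integral_comp hemb f
  simpa only [Matrix.toLin'_apply] using this


/-- The multivariate complex Gaussian integral for `D = I − iC`, `C` real symmetric: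
`D` is invertible, `κ_D = ∫ exp(−π t·Dt) dt` is nonzero with `|κ_D| = |det D|^{-1/2}`,
and `∫ exp(−π (t·Dt − 2b·t)) dt = κ_D · exp(π b·D⁻¹b)` for all `b ∈ ℂⁿ`. -/
theorem complex_gaussian_integral
    (n : ℕ) (C : Matrix (Fin n) (Fin n) ℝ) (hC : C.IsSymm)
    (D : Matrix (Fin n) (Fin n) ℂ)
    (hD : D = 1 - Complex.I • C.map Complex.ofReal) :
    IsUnit D ∧
    gaussianIntegral n D ≠ 0 ∧
    ‖gaussianIntegral n D‖ = ‖D.det‖ ^ (-(1 / 2 : ℝ)) ∧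
    ∀ b : Fin n → ℂ,
      (∫ t : Fin n → ℝ, Complex.exp (-(Real.pi : ℂ) *
          (((fun i => ((t i : ℝ) : ℂ)) ⬝ᵥ D.mulVec fun i => ((t i : ℝ) : ℂ)) -
            2 * (b ⬝ᵥ fun i => ((t i : ℝ) : ℂ))))) =
        gaussianIntegral n D *
          Complex.exp ((Real.pi : ℂ) * (b ⬝ᵥ D⁻¹.mulVec b)) := by
  classical
  have hCh : C.IsHermitian := by
    rwa [Matrix.IsHermitian, Matrix.conjTranspose_eq_transpose_of_trivial]
  set O : Matrix (Fin n) (Fin n) ℝ := (hCh.eigenvectorUnitary : Matrix (Fin n) (Fin n) ℝ) with hOdef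
  have hOmem := hCh.eigenvectorUnitary.2
  have hOO : Oᵀ * O = 1 := by
    have := (Matrix.mem_unitaryGroup_iff').mp hOmem
    rwa [Matrix.star_eq_conjTranspose, Matrix.conjTranspose_eq_transpose_of_trivial] at this
  have hOO' : O * Oᵀ = 1 := by
    have := (Matrix.mem_unitaryGroup_iff).mp hOmem
    rwa [Matrix.star_eq_conjTranspose, Matrix.conjTranspose_eq_transpose_of_trivial] at this
  set lam : Fin n → ℝ := hCh.eigenvalues with hlam
  have hspec : C = O * Matrix.diagonal lam * Oᵀ := by
    have := hCh.spectral_theorem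
    rwa [Unitary.conjStarAlgAut_apply, Matrix.star_eq_conjTranspose, Matrix.conjTranspose_eq_transpose_of_trivial,
      RCLike.ofReal_real_eq_id, Function.id_comp] at this
  -- complex versions
  set P : Matrix (Fin n) (Fin n) ℂ := O.map Complex.ofReal with hPdef
  have hmapmul : ∀ (A B : Matrix (Fin n) (Fin n) ℝ),
      (A * B).map Complex.ofReal = A.map Complex.ofReal * B.map Complex.ofReal := by
    intro A B; ext i j
    simp only [Matrix.map_apply, Matrix.mul_apply]
    push_cast; rfl
  have hPt : Pᵀ = Oᵀ.map Complex.ofReal := by rw [hPdef, Matrix.transpose_map]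
  have hPtP : Pᵀ * P = 1 := by
    rw [hPt, hPdef, ← hmapmul, hOO]
    ext i j; simp [Matrix.map_apply, Matrix.one_apply]; split <;> simp
  have hPPt : P * Pᵀ = 1 := by
    rw [hPt, hPdef, ← hmapmul, hOO']
    ext i j; simp [Matrix.map_apply, Matrix.one_apply]; split <;> simp
  set d : Fin n → ℂ := fun j => 1 - Complex.I * (lam j : ℂ) with hddef
  have hd_ne : ∀ j, d j ≠ 0 := by
    intro j h
    have := congrArg Complex.re h
    simp [hddef] at this
  have hCmap : C.map Complex.ofReal = P * Matrix.diagonal (fun j => (lam j : ℂ)) * Pᵀ := by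
    rw [hspec, hmapmul, hmapmul, hPt]
    congr 1
    congr 1
    rw [Matrix.diagonal_map (by simp)]
  have hDd : D = P * Matrix.diagonal d * Pᵀ := by
    have hdiag : Matrix.diagonal d = 1 - Complex.I • Matrix.diagonal (fun j => (lam j : ℂ)) := by
      ext i j
      by_cases h : i = j <;> simp [Matrix.diagonal_apply, h, Matrix.one_apply, hddef]
    rw [hD, hCmap, hdiag, Matrix.mul_sub, Matrix.mul_one, Matrix.sub_mul, Matrix.mul_smul,
      Matrix.smul_mul, hPPt]
  have hdetP : P.det = (O.det : ℂ) := by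
    rw [hPdef]
    exact (RingHom.map_det Complex.ofRealHom O).symm
  have hdetO : O.det = 1 ∨ O.det = -1 := by
    have h := congrArg Matrix.det hOO
    rw [Matrix.det_mul, Matrix.det_transpose, Matrix.det_one] at h
    exact mul_self_eq_one_iff.mp h
  have habsP : ‖P.det‖ = 1 := by
    rcases hdetO with h | h <;> simp [hdetP, h]
  have hdetD : D.det = P.det * (∏ j, d j) * P.det := by
    rw [hDd, Matrix.det_mul, Matrix.det_mul, Matrix.det_transpose, Matrix.det_diagonal]
  have hdetD_ne : D.det ≠ 0 := by
    rw [hdetD]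
    have hP0 : P.det ≠ 0 := by
      intro h; rw [h] at habsP; simp at habsP
    exact mul_ne_zero (mul_ne_zero hP0 (Finset.prod_ne_zero_iff.mpr fun j _ => hd_ne j)) hP0
  have hUnit : IsUnit D := (Matrix.isUnit_iff_isUnit_det D).mpr (isUnit_iff_ne_zero.mpr hdetD_ne)
  have hconj : ∀ A B : Matrix (Fin n) (Fin n) ℂ, (P * A * Pᵀ) * (P * B * Pᵀ) = P * (A * B) * Pᵀ := by
    intro A B
    simp only [Matrix.mul_assoc]
    rw [← Matrix.mul_assoc Pᵀ P, hPtP, Matrix.one_mul]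
  have hDinv : D⁻¹ = P * Matrix.diagonal (fun j => (d j)⁻¹) * Pᵀ := by
    apply Matrix.inv_eq_right_inv
    rw [hDd, hconj, Matrix.diagonal_mul_diagonal]
    have : (fun j => d j * (d j)⁻¹) = fun _ => (1 : ℂ) := by
      funext j; exact mul_inv_cancel₀ (hd_ne j)
    rw [this, Matrix.diagonal_one, Matrix.mul_one, hPPt]
  have hPDP : Pᵀ * D * P = Matrix.diagonal d := by
    rw [hDd]
    simp only [Matrix.mul_assoc]
    rw [← Matrix.mul_assoc Pᵀ P, hPtP, Matrix.one_mul, Matrix.mul_one]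
  -- vector lemmas
  have hcast : ∀ u : Fin n → ℝ, (fun i => ((O *ᵥ u) i : ℂ)) = P *ᵥ (fun i => (u i : ℂ)) := by
    intro u; funext i
    simp only [Matrix.mulVec, dotProduct, hPdef, Matrix.map_apply]
    push_cast; rfl
  have hlin : ∀ (b : Fin n → ℂ) (z : Fin n → ℂ), b ⬝ᵥ (P *ᵥ z) = (Pᵀ *ᵥ b) ⬝ᵥ z := by
    intro b z
    rw [Matrix.dotProduct_mulVec, Matrix.mulVec_transpose]
  have hquad : ∀ z : Fin n → ℂ, (P *ᵥ z) ⬝ᵥ D *ᵥ (P *ᵥ z) = ∑ j, d j * z j ^ 2 := by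
    intro z
    rw [Matrix.mulVec_mulVec, Matrix.dotProduct_mulVec, ← Matrix.vecMul_transpose,
      Matrix.vecMul_vecMul, ← Matrix.mul_assoc, hPDP]
    simp only [dotProduct, Matrix.vecMul_diagonal]
    exact Finset.sum_congr rfl fun j _ => by ring
  have habsO : |O.det| = 1 := by rcases hdetO with h | h <;> simp [h]
  have hpi : ((Real.pi : ℝ) : ℂ) ≠ 0 := Complex.ofReal_ne_zero.mpr Real.pi_ne_zero
  have key : ∀ b : Fin n → ℂ,
      (∫ t : Fin n → ℝ, Complex.exp (-(Real.pi : ℂ) *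
          (((fun i => ((t i : ℝ) : ℂ)) ⬝ᵥ D.mulVec fun i => ((t i : ℝ) : ℂ)) -
            2 * (b ⬝ᵥ fun i => ((t i : ℝ) : ℂ))))) =
      (∏ j, ((d j)⁻¹) ^ (1 / 2 : ℂ)) *
        Complex.exp ((Real.pi : ℂ) * ∑ j, (Pᵀ *ᵥ b) j ^ 2 / d j) := by
    intro b
    set c : Fin n → ℂ := Pᵀ *ᵥ b with hc
    rw [← integral_comp_mulVec habsO]
    have hint : ∀ u : Fin n → ℝ,
        Complex.exp (-(Real.pi : ℂ) *
          (((fun i => (((O *ᵥ u) i : ℝ) : ℂ)) ⬝ᵥ D.mulVec fun i => (((O *ᵥ u) i : ℝ) : ℂ)) -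
            2 * (b ⬝ᵥ fun i => (((O *ᵥ u) i : ℝ) : ℂ)))) =
        Complex.exp (-∑ j, ((Real.pi : ℂ) * d j) * (u j : ℂ) ^ 2 +
          ∑ j, (2 * (Real.pi : ℂ) * c j) * (u j : ℂ)) := by
      intro u
      rw [hcast u, hquad, hlin]
      congr 1
      simp only [dotProduct, mul_assoc, ← Finset.mul_sum]
      ring
    simp_rw [hint]
    rw [GaussianFourier.integral_cexp_neg_sum_mul_add (fun i => by
      have h1 : ((Real.pi : ℂ) * d i).re = Real.pi := by
        simp [hddef, Complex.mul_re, Complex.sub_re, Complex.mul_im]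
      rw [h1]; exact Real.pi_pos) (fun j => 2 * (Real.pi : ℂ) * c j)]
    have hfac : ∀ j : Fin n, ((Real.pi : ℂ) / ((Real.pi : ℂ) * d j)) ^ (1 / 2 : ℂ) *
        Complex.exp ((2 * (Real.pi : ℂ) * c j) ^ 2 / (4 * ((Real.pi : ℂ) * d j))) =
        ((d j)⁻¹) ^ (1 / 2 : ℂ) * Complex.exp ((Real.pi : ℂ) * (c j ^ 2 / d j)) := by
      intro j
      have h2 : ((Real.pi : ℂ) / ((Real.pi : ℂ) * d j)) = (d j)⁻¹ := by
        rw [div_mul_eq_div_div, div_self hpi, one_div]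
      have h3 : (2 * (Real.pi : ℂ) * c j) ^ 2 / (4 * ((Real.pi : ℂ) * d j)) =
          (Real.pi : ℂ) * (c j ^ 2 / d j) := by
        field_simp [hd_ne j]
        ring
      rw [h2, h3]
    simp_rw [hfac]
    rw [Finset.prod_mul_distrib, ← Complex.exp_sum, ← Finset.mul_sum]
  have hkappa : gaussianIntegral n D = ∏ j, ((d j)⁻¹) ^ (1 / 2 : ℂ) := by
    have h0 := key 0
    simp only [zero_dotProduct, mul_zero, sub_zero, Matrix.mulVec_zero, Pi.zero_apply,
      ne_eq, OfNat.ofNat_ne_zero, not_false_eq_true, zero_pow, zero_div, Finset.sum_const_zero,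
      Complex.exp_zero, mul_one] at h0
    unfold gaussianIntegral
    exact h0
  have habsd : ∀ j : Fin n, ‖((d j)⁻¹) ^ (1 / 2 : ℂ)‖ =
      (‖d j‖)⁻¹ ^ ((1 : ℝ) / 2) := by
    intro j
    rw [show (1 / 2 : ℂ) = (((1 : ℝ) / 2 : ℝ) : ℂ) by norm_num, Complex.norm_cpow_real, norm_inv]
  have hbDb : ∀ b : Fin n → ℂ, b ⬝ᵥ D⁻¹ *ᵥ b = ∑ j, (Pᵀ *ᵥ b) j ^ 2 / d j := by
    intro b
    rw [hDinv, ← Matrix.mulVec_mulVec, ← Matrix.mulVec_mulVec, hlin]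
    simp only [dotProduct, Matrix.mulVec_diagonal]
    exact Finset.sum_congr rfl fun j _ => by rw [div_eq_mul_inv]; ring
  refine ⟨hUnit, ?_, ?_, ?_⟩
  · rw [hkappa]
    exact Finset.prod_ne_zero_iff.mpr fun j _ => fun h =>
      hd_ne j (inv_eq_zero.mp ((Complex.cpow_eq_zero_iff _ _).mp h).1)
  · rw [hkappa, norm_prod]
    have h2 : ‖D.det‖ = ∏ j, ‖d j‖ := by
      rw [hdetD, norm_mul, norm_mul, habsP, norm_prod, one_mul, mul_one]
    rw [h2]
    rw [show (-(1 / 2 : ℝ)) = -((1:ℝ)/2) by norm_num]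
    rw [Real.rpow_neg (Finset.prod_nonneg fun j _ => norm_nonneg _),
      ← Real.finset_prod_rpow _ _ (fun j _ => norm_nonneg _) _,
      ← Finset.prod_inv_distrib]
    refine Finset.prod_congr rfl fun j _ => ?_
    rw [habsd j, Real.inv_rpow (norm_nonneg _)]
  · intro b
    rw [key b, hkappa, hbDb b]
end

section
/- Let d ≥ 1, let K ⊂ ℝ^{2d} be compact, let Λ ⊂ ℝ^{2d} be any lattice, and let B be a real symmetric positive definite 2d×2d matrix. If F ∈ L²(ℝ^{2d}) vanishes almost everywhere outside K and ∫_{ℝ^{2d}} F(t) · exp(−π (t−λ)·B(t−λ)) dt = 0 for every λ ∈ Λ, then F = 0 almost everywhere. Equivalently, the map sending F ∈ L²(ℝ^{2d}) with support in K to the sequence of its pairings against the lattice translates of the Gaussian t ↦ exp(−π t·Bt) is injective for every lattice Λ. -/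
open Matrix MeasureTheory

/-- Analytic content of Theorem 5.9: an `L²` function supported in a compact set
`K ⊂ ℝ^{2d}` is determined by its pairings against the lattice translates of the
Gaussian `t ↦ exp(−π t·Bt)`, for any lattice `Λ` and any real symmetric positive
definite `B`. -/
theorem compactly_supported_identifiable_gaussian
    (d : ℕ) (hd : 1 ≤ d)
    (K : Set (Fin (2 * d) → ℝ)) (hK : IsCompact K)
    (Λ : Set (Fin (2 * d) → ℝ)) (hΛ : IsLattice (2 * d) Λ)
    (B : Matrix (Fin (2 * d)) (Fin (2 * d)) ℝ) (hB : B.PosDef)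
    (F : (Fin (2 * d) → ℝ) → ℂ) (hF : MemLp F 2 volume)
    (hsupp : ∀ᵐ t : Fin (2 * d) → ℝ, t ∉ K → F t = 0)
    (hzero : ∀ lam ∈ Λ,
      (∫ t : Fin (2 * d) → ℝ, F t *
        Complex.exp (-(Real.pi : ℂ) *
          (((t - lam) ⬝ᵥ B.mulVec (t - lam) : ℝ) : ℂ))) = 0) :
    F =ᵐ[volume] 0 := by
  classical
  obtain ⟨M, hM, hΛeq⟩ := hΛ
  have hπ : (0:ℝ) < Real.pi := Real.pi_pos
  have hKm : MeasurableSet K := hK.measurableSet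
  -- F is integrable
  have hfin : IsFiniteMeasure (volume.restrict K) :=
    ⟨by simpa [hKm] using hK.measure_lt_top⟩
  have hFrest : Integrable F (volume.restrict K) :=
    (hF.restrict K).integrable (by norm_num)
  have hFind : F =ᵐ[volume] K.indicator F := by
    filter_upwards [hsupp] with t ht
    by_cases h : t ∈ K
    · simp [Set.indicator_of_mem h]
    · simp [Set.indicator_of_notMem h, ht h]
  have hFint : Integrable F volume := by
    rw [integrable_congr hFind]
    exact (integrable_indicator_iff hKm).2 hFrest
  -- positivity of the quadratic form
  have hq0 : ∀ t : Fin (2 * d) → ℝ, 0 ≤ t ⬝ᵥ B.mulVec t := by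
    intro t
    by_cases ht : t = 0
    · simp [ht]
    · have := hB.dotProduct_mulVec_pos ht
      simpa using this.le
  -- continuity of the quadratic form
  have hqc : Continuous fun t : Fin (2 * d) → ℝ => t ⬝ᵥ B.mulVec t := by
    show Continuous fun t : Fin (2 * d) → ℝ => ∑ i, t i * ∑ j, B i j * t j
    exact continuous_finset_sum _ fun i _ =>
      (continuous_apply i).mul
        (continuous_finset_sum _ fun j _ => continuous_const.mul (continuous_apply j))
  -- the function φ
  set φ : (Fin (2 * d) → ℝ) → ℂ :=
      fun t => F t * Complex.exp (-(Real.pi : ℂ) * ((t ⬝ᵥ B.mulVec t : ℝ) : ℂ)) with hφdef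
  have hφmeas : AEStronglyMeasurable φ volume := by
    apply hFint.aestronglyMeasurable.mul
    exact (Complex.continuous_exp.comp
      ((continuous_const.mul (Complex.continuous_ofReal.comp hqc)))).aestronglyMeasurable
  have hφle : ∀ t, ‖φ t‖ ≤ ‖F t‖ := by
    intro t
    rw [hφdef]
    simp only [norm_mul]
    have h1 : ‖Complex.exp (-(Real.pi : ℂ) * ((t ⬝ᵥ B.mulVec t : ℝ) : ℂ))‖ ≤ 1 := by
      have h2 : (-(Real.pi : ℂ) * ((t ⬝ᵥ B.mulVec t : ℝ) : ℂ))
          = ((-(Real.pi * (t ⬝ᵥ B.mulVec t)) : ℝ) : ℂ) := by push_cast; ring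
      rw [h2, Complex.norm_exp_ofReal, Real.exp_le_one_iff]
      have := hq0 t
      nlinarith
    calc ‖F t‖ * ‖Complex.exp (-(Real.pi : ℂ) * ((t ⬝ᵥ B.mulVec t : ℝ) : ℂ))‖
        ≤ ‖F t‖ * 1 := mul_le_mul_of_nonneg_left h1 (norm_nonneg _)
      _ = ‖F t‖ := mul_one _
  have hφint : Integrable φ volume :=
    hFint.norm.mono' hφmeas (Filter.Eventually.of_forall hφle)
  have hφsupp : ∀ᵐ t, t ∉ K → φ t = 0 := by
    filter_upwards [hsupp] with t ht h
    rw [hφdef]; simp [ht h]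
  -- symmetry and quadratic expansion
  have hBT : Bᵀ = B := (by simpa using hB.1 : B.IsSymm).eq
  have hsym : ∀ v w : Fin (2 * d) → ℝ, v ⬝ᵥ B.mulVec w = w ⬝ᵥ B.mulVec v := by
    intro v w
    rw [dotProduct_mulVec, dotProduct_comm, ← hBT, vecMul_transpose, hBT]
  -- the exponential test functions
  set e : (Fin (2 * d) → ℤ) → (Fin (2 * d) → ℝ) → ℝ :=
      fun k t => Real.exp (2 * Real.pi * (t ⬝ᵥ (B * M).mulVec fun i => (k i : ℝ))) with hedef
  -- key vanishing integrals
  have hkey : ∀ k : Fin (2 * d) → ℤ, (∫ t, φ t * (e k t : ℂ)) = 0 := by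
    intro k
    set lam : Fin (2 * d) → ℝ := M.mulVec fun i => (k i : ℝ) with hlam
    have hmem : lam ∈ Λ := by rw [hΛeq]; exact ⟨k, rfl⟩
    have h0 := hzero lam hmem
    have hquad : ∀ t : Fin (2 * d) → ℝ,
        (t - lam) ⬝ᵥ B.mulVec (t - lam)
          = t ⬝ᵥ B.mulVec t - 2 * (t ⬝ᵥ (B * M).mulVec fun i => (k i : ℝ))
            + lam ⬝ᵥ B.mulVec lam := by
      intro t
      have h1 : B.mulVec lam = (B * M).mulVec fun i => (k i : ℝ) := by
        rw [hlam, mulVec_mulVec]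
      rw [mulVec_sub, sub_dotProduct, dotProduct_sub, dotProduct_sub, hsym lam t, h1]
      ring
    have hpt : ∀ t : Fin (2 * d) → ℝ,
        F t * Complex.exp (-(Real.pi : ℂ) * (((t - lam) ⬝ᵥ B.mulVec (t - lam) : ℝ) : ℂ))
          = Complex.exp (-(Real.pi : ℂ) * ((lam ⬝ᵥ B.mulVec lam : ℝ) : ℂ))
            * (φ t * (e k t : ℂ)) := by
      intro t
      rw [hφdef, hedef]
      simp only []
      rw [hquad t, Complex.ofReal_exp]
      rw [show Complex.exp (-(Real.pi : ℂ) * ((lam ⬝ᵥ B.mulVec lam : ℝ) : ℂ)) *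
            (F t * Complex.exp (-(Real.pi : ℂ) * ((t ⬝ᵥ B.mulVec t : ℝ) : ℂ)) *
              Complex.exp ((2 * Real.pi * (t ⬝ᵥ (B * M).mulVec fun i => (k i : ℝ)) : ℝ) : ℂ))
          = F t * Complex.exp (-(Real.pi : ℂ) * ((lam ⬝ᵥ B.mulVec lam : ℝ) : ℂ)
              + -(Real.pi : ℂ) * ((t ⬝ᵥ B.mulVec t : ℝ) : ℂ)
              + ((2 * Real.pi * (t ⬝ᵥ (B * M).mulVec fun i => (k i : ℝ)) : ℝ) : ℂ)) from by
        rw [Complex.exp_add, Complex.exp_add]; ring]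
      congr 1
      push_cast
      ring
    have h1 : (∫ t, Complex.exp (-(Real.pi : ℂ) * ((lam ⬝ᵥ B.mulVec lam : ℝ) : ℂ))
        * (φ t * (e k t : ℂ))) = 0 := by
      rw [← h0]
      exact integral_congr_ae (Filter.Eventually.of_forall fun t => (hpt t).symm)
    rw [integral_const_mul] at h1
    rcases mul_eq_zero.1 h1 with h | h
    · exact absurd h (Complex.exp_ne_zero _)
    · exact h
  -- invertibility
  have hBu : IsUnit B := (Matrix.isUnit_iff_isUnit_det B).2 hB.det_pos.ne'.isUnit
  have hNu : IsUnit (B * M) := hBu.mul hM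
  -- continuity of test functions
  have hec : ∀ k : Fin (2 * d) → ℤ, Continuous (e k) := by
    intro k
    rw [hedef]
    apply Real.continuous_exp.comp
    apply continuous_const.mul
    show Continuous fun t : Fin (2 * d) → ℝ => ∑ i, t i * ((B * M).mulVec fun i => (k i : ℝ)) i
    exact continuous_finset_sum _ fun i _ => (continuous_apply i).mul continuous_const
  haveI : CompactSpace K := isCompact_iff_compactSpace.mp hK
  set eC : (Fin (2 * d) → ℤ) → C(K, ℝ) :=
      fun k => ContinuousMap.restrict K ⟨e k, hec k⟩ with heCdef
  have heCapp : ∀ k (x : K), eC k x = e k (x : Fin (2 * d) → ℝ) := fun k x => rfl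
  -- multiplicative structure
  have hcast : ∀ k k' : Fin (2 * d) → ℤ,
      (fun i => ((k i + k' i : ℤ) : ℝ)) = (fun i => (k i : ℝ)) + fun i => (k' i : ℝ) := by
    intro k k'; funext i; push_cast; rfl
  have heCmul : ∀ k k', eC k * eC k' = eC (k + k') := by
    intro k k'
    ext x
    simp only [ContinuousMap.mul_apply, heCapp, hedef]
    rw [← Real.exp_add]
    congr 1
    have h2 : (fun i => (((k + k') i : ℤ) : ℝ)) = (fun i => (k i : ℝ)) + fun i => (k' i : ℝ) :=
      hcast k k'
    rw [h2, mulVec_add, dotProduct_add]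
    ring
  have heCone : eC 0 = 1 := by
    ext x
    simp only [ContinuousMap.one_apply, heCapp, hedef]
    have h2 : (fun i => ((0 : Fin (2 * d) → ℤ) i : ℝ)) = (0 : Fin (2 * d) → ℝ) := by
      funext i; simp
    rw [h2, mulVec_zero, dotProduct_zero, mul_zero, Real.exp_zero]
  -- the subalgebra
  set A : Subalgebra ℝ C(K, ℝ) := Algebra.adjoin ℝ (Set.range eC) with hAdef
  -- separation of points
  have hsep : A.SeparatesPoints := by
    intro x y hxy
    have hxy' : (x : Fin (2 * d) → ℝ) ≠ (y : Fin (2 * d) → ℝ) := Subtype.coe_injective.ne hxy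
    have hvinj : Function.Injective (B * M).vecMul :=
      Matrix.vecMul_injective_iff_isUnit.2 hNu
    have hne : (x : Fin (2 * d) → ℝ) ᵥ* (B * M) ≠ (y : Fin (2 * d) → ℝ) ᵥ* (B * M) :=
      fun h => hxy' (hvinj h)
    obtain ⟨i, hi⟩ := Function.ne_iff.1 hne
    set k : Fin (2 * d) → ℤ := Pi.single i 1 with hkdef
    have hsingle : (fun j => (k j : ℝ)) = Pi.single i (1 : ℝ) := by
      funext j
      rw [hkdef]
      by_cases h : j = i
      · subst h; simp
      · simp [Pi.single_apply, h]
    have hval : ∀ t : Fin (2 * d) → ℝ, t ⬝ᵥ (B * M).mulVec (fun j => (k j : ℝ)) = (t ᵥ* (B * M)) i := by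
      intro t
      rw [dotProduct_mulVec, hsingle, dotProduct_single, mul_one]
    refine ⟨(eC k : C(K, ℝ)), ⟨eC k, ⟨Algebra.subset_adjoin ⟨k, rfl⟩, rfl⟩⟩, ?_⟩
    simp only [heCapp, hedef]
    intro hcontra
    have h3 : 2 * Real.pi * ((x : Fin (2 * d) → ℝ) ᵥ* (B * M)) i
        = 2 * Real.pi * ((y : Fin (2 * d) → ℝ) ᵥ* (B * M)) i := by
      have := hcontra
      rw [hval, hval] at this
      have hinj : Function.Injective Real.exp := Real.exp_strictMono.injective
      exact hinj this
    exact hi (mul_left_cancel₀ (by positivity) h3)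
  have hdense : A.topologicalClosure = ⊤ :=
    ContinuousMap.subalgebra_topologicalClosure_eq_top_of_separatesPoints A hsep
  -- extension by zero
  set ext : C(K, ℝ) → (Fin (2 * d) → ℝ) → ℝ :=
      fun p t => if ht : t ∈ K then p ⟨t, ht⟩ else 0 with hextdef
  have hextK : ∀ p : C(K, ℝ), ContinuousOn (ext p) K := by
    intro p
    rw [continuousOn_iff_continuous_restrict]
    have : K.domRestrict (ext p) = p := by
      funext x
      simp only [Set.domRestrict_apply, hextdef, dif_pos x.2]
    rw [this]
    exact p.continuous
  have hextbd : ∀ (p : C(K, ℝ)) t, |ext p t| ≤ ‖p‖ := by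
    intro p t
    rw [hextdef]
    by_cases h : t ∈ K
    · simp only [dif_pos h]
      exact p.norm_coe_le_norm ⟨t, h⟩
    · simp only [dif_neg h, abs_zero]
      exact norm_nonneg p
  have hint : ∀ p : C(K, ℝ), Integrable (fun t => φ t * ((ext p t : ℝ) : ℂ)) volume := by
    intro p
    have hmeas : AEStronglyMeasurable (fun t => φ t * ((ext p t : ℝ) : ℂ)) volume := by
      have heq : (fun t => φ t * ((ext p t : ℝ) : ℂ))
          = K.indicator (fun t => φ t * ((ext p t : ℝ) : ℂ)) := by
        funext t
        by_cases h : t ∈ K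
        · rw [Set.indicator_of_mem h]
        · rw [Set.indicator_of_notMem h, hextdef]
          simp [dif_neg h]
      rw [heq, aestronglyMeasurable_indicator_iff hKm]
      exact (hφmeas.restrict).mul
        ((Complex.continuous_ofReal.comp_continuousOn (hextK p)).aestronglyMeasurable hKm)
    apply Integrable.mono' (hφint.norm.const_mul ‖p‖) hmeas
    filter_upwards with t
    rw [norm_mul, Complex.norm_real, Real.norm_eq_abs, mul_comm]
    exact mul_le_mul_of_nonneg_right (hextbd p t) (norm_nonneg _)
  -- vanishing on the subalgebra
  have hvanish : ∀ p ∈ A, (∫ t, φ t * ((ext p t : ℝ) : ℂ)) = 0 := by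
    intro p hp
    -- transfer adjoin membership to span membership
    set Smon : Submonoid C(K, ℝ) :=
      { carrier := Set.range eC
        one_mem' := ⟨0, heCone⟩
        mul_mem' := by
          rintro a b ⟨k, rfl⟩ ⟨k', rfl⟩
          exact ⟨k + k', (heCmul k k').symm⟩ } with hSmon
    have hcl : Submonoid.closure (Set.range eC) = Smon := by
      apply le_antisymm
      · exact Submonoid.closure_le.2 le_rfl
      · intro x hx
        exact Submonoid.subset_closure hx
    have hp' : p ∈ Submodule.span ℝ (Set.range eC) := by
      have h1 := Algebra.adjoin_eq_span (R := ℝ) (s := Set.range eC)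
      have h2 : p ∈ Subalgebra.toSubmodule A := hp
      rw [hAdef, h1, hcl] at h2
      exact h2
    refine Submodule.span_induction
      (p := fun q _ => (∫ t, φ t * ((ext q t : ℝ) : ℂ)) = 0) ?_ ?_ ?_ ?_ hp'
    · rintro q ⟨k, rfl⟩
      have hae : (fun t => φ t * ((ext (eC k) t : ℝ) : ℂ))
          =ᵐ[volume] fun t => φ t * ((e k t : ℝ) : ℂ) := by
        filter_upwards [hφsupp] with t ht
        by_cases h : t ∈ K
        · rw [hextdef]
          simp only [dif_pos h]
          rfl
        · rw [ht h]
          simp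
      rw [integral_congr_ae hae]
      exact hkey k
    · have : ∀ t, φ t * ((ext 0 t : ℝ) : ℂ) = 0 := by
        intro t
        rw [hextdef]
        by_cases h : t ∈ K
        · simp [dif_pos h]
        · simp [dif_neg h]
      simp only [this, integral_zero]
    · intro q r hq hr hq0 hr0
      have hpt : ∀ t, φ t * ((ext (q + r) t : ℝ) : ℂ)
          = φ t * ((ext q t : ℝ) : ℂ) + φ t * ((ext r t : ℝ) : ℂ) := by
        intro t
        rw [hextdef]
        by_cases h : t ∈ K
        · simp only [dif_pos h, ContinuousMap.add_apply]
          push_cast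
          ring
        · simp [dif_neg h]
      rw [show (fun t => φ t * ((ext (q + r) t : ℝ) : ℂ))
            = fun t => φ t * ((ext q t : ℝ) : ℂ) + φ t * ((ext r t : ℝ) : ℂ) from funext hpt,
        integral_add (hint q) (hint r), hq0, hr0, add_zero]
    · intro a q hq hq0
      have hpt : ∀ t, φ t * ((ext (a • q) t : ℝ) : ℂ)
          = (a : ℂ) * (φ t * ((ext q t : ℝ) : ℂ)) := by
        intro t
        rw [hextdef]
        by_cases h : t ∈ K
        · simp only [dif_pos h, ContinuousMap.smul_apply, smul_eq_mul]
          push_cast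
          ring
        · simp [dif_neg h]
      rw [show (fun t => φ t * ((ext (a • q) t : ℝ) : ℂ))
            = fun t => (a : ℂ) * (φ t * ((ext q t : ℝ) : ℂ)) from funext hpt,
        integral_const_mul, hq0, mul_zero]
  -- conclude : φ pairs to zero against all smooth compactly supported functions
  have hφ0 : ∀ᵐ t, φ t = 0 := by
    apply ae_eq_zero_of_integral_contDiff_smul_eq_zero hφint.locallyIntegrable
    intro g hg hgsupp
    set gr : C(K, ℝ) := ContinuousMap.restrict K ⟨g, hg.continuous⟩ with hgrdef
    have h1 : (∫ x, g x • φ x) = ∫ t, φ t * ((ext gr t : ℝ) : ℂ) := by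
      apply integral_congr_ae
      filter_upwards [hφsupp] with t ht
      by_cases h : t ∈ K
      · rw [hextdef]
        simp only [dif_pos h]
        rw [Complex.real_smul]
        rw [show (gr ⟨t, h⟩ : ℝ) = g t from rfl]
        ring
      · rw [ht h]
        simp
    rw [h1]
    set I := ∫ t, φ t * ((ext gr t : ℝ) : ℂ) with hIdef
    set C := ∫ t, ‖φ t‖ with hCdef
    have hC0 : 0 ≤ C := integral_nonneg fun t => norm_nonneg _
    have hbound : ∀ ε > (0:ℝ), ‖I‖ ≤ ε * C := by
      intro ε hε
      have hgr : gr ∈ closure (A : Set C(K, ℝ)) := by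
        have hmem : gr ∈ A.topologicalClosure := by
          rw [hdense]; trivial
        rw [← Subalgebra.topologicalClosure_coe]
        exact hmem
      obtain ⟨p, hpA, hpd⟩ := Metric.mem_closure_iff.1 hgr ε hε
      have hsub : I = ∫ t, (φ t * ((ext gr t : ℝ) : ℂ) - φ t * ((ext p t : ℝ) : ℂ)) := by
        rw [integral_sub (hint gr) (hint p), hvanish p hpA, sub_zero, hIdef]
      rw [hsub]
      have hptbd : ∀ t, ‖φ t * ((ext gr t : ℝ) : ℂ) - φ t * ((ext p t : ℝ) : ℂ)‖ ≤ ε * ‖φ t‖ := by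
        intro t
        have heq2 : φ t * ((ext gr t : ℝ) : ℂ) - φ t * ((ext p t : ℝ) : ℂ)
            = φ t * (((ext gr t - ext p t : ℝ)) : ℂ) := by push_cast; ring
        rw [heq2, norm_mul, Complex.norm_real, Real.norm_eq_abs]
        have habs : |ext gr t - ext p t| ≤ ε := by
          rw [hextdef]
          by_cases h : t ∈ K
          · simp only [dif_pos h]
            have : gr ⟨t, h⟩ - p ⟨t, h⟩ = (gr - p) ⟨t, h⟩ := by
              simp [ContinuousMap.sub_apply]
            rw [this]
            calc |(gr - p) ⟨t, h⟩| ≤ ‖gr - p‖ := (gr - p).norm_coe_le_norm ⟨t, h⟩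
              _ = dist gr p := (dist_eq_norm gr p).symm
              _ ≤ ε := hpd.le
          · simp only [dif_neg h, sub_zero, abs_zero]
            exact hε.le
        calc ‖φ t‖ * |ext gr t - ext p t| ≤ ‖φ t‖ * ε :=
              mul_le_mul_of_nonneg_left habs (norm_nonneg _)
          _ = ε * ‖φ t‖ := mul_comm _ _
      calc ‖∫ t, (φ t * ((ext gr t : ℝ) : ℂ) - φ t * ((ext p t : ℝ) : ℂ))‖
          ≤ ∫ t, ‖φ t * ((ext gr t : ℝ) : ℂ) - φ t * ((ext p t : ℝ) : ℂ)‖ :=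
            norm_integral_le_integral_norm _
        _ ≤ ∫ t, ε * ‖φ t‖ := by
            apply integral_mono ((hint gr).sub (hint p)).norm (hφint.norm.const_mul ε)
            exact hptbd
        _ = ε * C := by rw [integral_const_mul, hCdef]
    have hI0 : ‖I‖ ≤ 0 := by
      by_contra h3
      push_neg at h3
      have hden : (0:ℝ) < 2 * (C + 1) := by linarith
      have h4 := hbound (‖I‖ / (2 * (C + 1))) (div_pos h3 hden)
      have h5 : ‖I‖ / (2 * (C + 1)) * C < ‖I‖ := by
        rw [div_mul_eq_mul_div, div_lt_iff₀ hden]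
        nlinarith
      linarith
    exact norm_eq_zero.1 (le_antisymm hI0 (norm_nonneg I))
  -- conclude
  filter_upwards [hφ0] with t ht
  have h2 : F t * Complex.exp (-(Real.pi : ℂ) * ((t ⬝ᵥ B.mulVec t : ℝ) : ℂ)) = 0 := ht
  rcases mul_eq_zero.1 h2 with h | h
  · simpa using h
  · exact absurd h (Complex.exp_ne_zero _)
end

section
/- Let n ≥ 1, let K ⊂ ℝⁿ be compact, let 1 ≤ p < ∞, let Λ ⊂ ℝⁿ be any lattice, and let A ∈ ℂⁿˣⁿ be Hermitian with Re(A) invertible. Then the following are equivalent forms of density: the complex linear span of {x ↦ exp(−x·Ax + 2 x·Re(A)λ) : λ ∈ Λ} is dense in Lᵖ(K), and consequently the complex linear span of {x ↦ exp(2 x·Re(A)λ) : λ ∈ Λ} is dense in Lᵖ(K). In particular, since Re(A) is invertible, Re(A)Λ is again a lattice in ℝⁿ and the density of the span of {x ↦ exp(2 x·μ) : μ ∈ Re(A)Λ} in Lᵖ(K) holds. -/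
open Matrix MeasureTheory
open scoped ENNReal

lemma IsLattice.zero_mem {n : ℕ} {L : Set (Fin n → ℝ)} (hL : IsLattice n L) : 0 ∈ L := by
  obtain ⟨M, hM, rfl⟩ := hL
  refine ⟨0, ?_⟩
  have : (fun i => ((0 : Fin n → ℤ) i : ℝ)) = 0 := by funext i; simp
  rw [this, Matrix.mulVec_zero]

lemma IsLattice.add_mem {n : ℕ} {L : Set (Fin n → ℝ)} (hL : IsLattice n L)
    {a b : Fin n → ℝ} (ha : a ∈ L) (hb : b ∈ L) : a + b ∈ L := by
  obtain ⟨M, hM, rfl⟩ := hL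
  obtain ⟨k₁, rfl⟩ := ha
  obtain ⟨k₂, rfl⟩ := hb
  refine ⟨k₁ + k₂, ?_⟩
  have : (fun i => (((k₁ + k₂) i : ℤ) : ℝ)) = (fun i => ((k₁ i : ℤ) : ℝ)) + fun i => ((k₂ i : ℤ) : ℝ) := by
    funext i; simp
  rw [this, Matrix.mulVec_add]

lemma IsLattice.exists_dot_ne {n : ℕ} {L : Set (Fin n → ℝ)} (hL : IsLattice n L)
    {v : Fin n → ℝ} (hv : v ≠ 0) : ∃ μ ∈ L, v ⬝ᵥ μ ≠ 0 := by
  obtain ⟨M, hM, rfl⟩ := hL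
  by_contra h
  push_neg at h
  apply hv
  have hinj := Matrix.vecMul_injective_iff_isUnit.mpr hM
  have hz : v ᵥ* M = 0 ᵥ* M := by
    funext i
    have h1 : ((fun j => ((Pi.single i (1 : ℤ) : Fin n → ℤ) j : ℝ))) = Pi.single i (1 : ℝ) := by
      funext j
      simp [Pi.single_apply, apply_ite]
    have := h (M.mulVec fun j => ((Pi.single i (1 : ℤ) : Fin n → ℤ) j : ℝ)) ⟨_, rfl⟩
    rw [Matrix.dotProduct_mulVec, h1, dotProduct_single] at this
    simpa using this
  exact hinj hz

lemma continuous_dot {n : ℕ} (μ : Fin n → ℝ) : Continuous fun x : Fin n → ℝ => x ⬝ᵥ μ := by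
  unfold dotProduct
  exact continuous_finset_sum _ fun i _ => (continuous_apply i).mul continuous_const

lemma memLp_of_continuous {n : ℕ} {K : Set (Fin n → ℝ)} (hK : IsCompact K)
    {f : (Fin n → ℝ) → ℂ} (hf : Continuous f) (p : ℝ≥0∞) :
    MemLp f p (volume.restrict K) := by
  haveI : IsFiniteMeasure (volume.restrict K) :=
    ⟨by simpa [Measure.restrict_apply_univ] using hK.measure_lt_top⟩
  obtain ⟨C, hC⟩ := hK.exists_bound_of_continuousOn hf.continuousOn
  refine MemLp.of_bound hf.aestronglyMeasurable C ?_
  filter_upwards [ae_restrict_mem hK.isClosed.measurableSet] with x hx using hC x hx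

lemma gen_cont {n : ℕ} (μ : Fin n → ℝ) :
    Continuous fun x : Fin n → ℝ => Complex.exp (2 * ((x ⬝ᵥ μ : ℝ) : ℂ)) :=
  Complex.continuous_exp.comp
    (continuous_const.mul (Complex.continuous_ofReal.comp (continuous_dot μ)))

lemma dense_span_exp {n : ℕ} {K : Set (Fin n → ℝ)} (hK : IsCompact K)
    {p : ℝ≥0∞} [Fact (1 ≤ p)] (hp : p ≠ ⊤) {L : Set (Fin n → ℝ)} (hL : IsLattice n L) :
    Dense (↑(Submodule.span ℂ
        {F : Lp ℂ p (volume.restrict K) |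
          ∃ μ ∈ L, (F : (Fin n → ℝ) → ℂ) =ᵐ[volume.restrict K]
            fun x => Complex.exp (2 * ((x ⬝ᵥ μ : ℝ) : ℂ))})
      : Set (Lp ℂ p (volume.restrict K))) := by
  haveI : IsFiniteMeasure (volume.restrict K) :=
    ⟨by simpa [Measure.restrict_apply_univ] using hK.measure_lt_top⟩
  haveI : (volume.restrict K).WeaklyRegular :=
    MeasureTheory.Measure.WeaklyRegular.restrict_of_measure_ne_top hK.measure_lt_top.ne
  haveI : CompactSpace ↥K := isCompact_iff_compactSpace.mp hK
  set μK := volume.restrict K with hμK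
  set gen : (Fin n → ℝ) → ((Fin n → ℝ) → ℂ) :=
    fun μ x => Complex.exp (2 * ((x ⬝ᵥ μ : ℝ) : ℂ)) with hgen
  set S : Set (Lp ℂ p μK) := {F | ∃ μ ∈ L, (F : (Fin n → ℝ) → ℂ) =ᵐ[μK] gen μ} with hS
  -- restricted generators
  have rcont : ∀ μ : Fin n → ℝ, Continuous fun z : ↥K => gen μ z.val :=
    fun μ => (gen_cont μ).comp continuous_subtype_val
  set rgen : (Fin n → ℝ) → C(↥K, ℂ) := fun μ => ⟨fun z => gen μ z.val, rcont μ⟩ with hrgen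
  set RS : Set C(↥K, ℂ) := {f | ∃ μ ∈ L, f = rgen μ} with hRS
  have exp_real : ∀ r : ℝ, Complex.exp (2 * (r : ℂ)) = ((Real.exp (2 * r) : ℝ) : ℂ) := by
    intro r
    rw [Complex.ofReal_exp]
    push_cast
    ring_nf
  have one_mem_RS : (1 : C(↥K, ℂ)) ∈ RS := by
    refine ⟨0, hL.zero_mem, ?_⟩
    ext z
    simp [hrgen, hgen]
  have mul_RS : ∀ f ∈ RS, ∀ g ∈ RS, f * g ∈ RS := by
    rintro f ⟨μ₁, hμ₁, rfl⟩ g ⟨μ₂, hμ₂, rfl⟩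
    refine ⟨μ₁ + μ₂, hL.add_mem hμ₁ hμ₂, ?_⟩
    ext z
    show gen μ₁ z.val * gen μ₂ z.val = gen (μ₁ + μ₂) z.val
    simp only [hgen]
    rw [← Complex.exp_add]
    congr 1
    rw [dotProduct_add]
    push_cast
    ring
  have one_mem_span : (1 : C(↥K, ℂ)) ∈ Submodule.span ℂ RS := Submodule.subset_span one_mem_RS
  have mul_mem_span : ∀ a b : C(↥K, ℂ), a ∈ Submodule.span ℂ RS → b ∈ Submodule.span ℂ RS →
      a * b ∈ Submodule.span ℂ RS := by
    intro a b ha hb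
    have h1 : a * b ∈ Submodule.span ℂ RS * Submodule.span ℂ RS := Submodule.mul_mem_mul ha hb
    rw [Submodule.span_mul_span] at h1
    refine Submodule.span_le.mpr ?_ h1
    rintro f ⟨u, hu, v, hv, rfl⟩
    exact Submodule.subset_span (mul_RS u hu v hv)
  have star_mem_span : ∀ a : C(↥K, ℂ), a ∈ Submodule.span ℂ RS →
      star a ∈ Submodule.span ℂ RS := by
    intro a ha
    induction ha using Submodule.span_induction with
    | mem x h =>
      obtain ⟨μ, hμ, rfl⟩ := h
      refine Submodule.subset_span ⟨μ, hμ, ?_⟩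
      ext z
      show star (gen μ z.val) = gen μ z.val
      simp only [hgen]
      rw [exp_real]
      exact Complex.conj_ofReal _
    | zero => simpa using Submodule.zero_mem _
    | add x y hx hy ihx ihy => rw [star_add]; exact Submodule.add_mem _ ihx ihy
    | smul c x hx ih => rw [star_smul]; exact Submodule.smul_mem _ _ ih
  set SA : StarSubalgebra ℂ C(↥K, ℂ) :=
    { carrier := Submodule.span ℂ RS
      mul_mem' := fun {a b} ha hb => mul_mem_span a b ha hb
      one_mem' := one_mem_span
      add_mem' := fun {a b} ha hb => Submodule.add_mem _ ha hb
      zero_mem' := Submodule.zero_mem _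
      algebraMap_mem' := fun c => by
        rw [Algebra.algebraMap_eq_smul_one]
        exact Submodule.smul_mem _ _ one_mem_span
      star_mem' := fun {a} ha => star_mem_span a ha } with hSA
  have hsep : SA.SeparatesPoints := by
    intro x y hxy
    have hv : (x : Fin n → ℝ) - (y : Fin n → ℝ) ≠ 0 :=
      fun h => hxy (Subtype.ext (sub_eq_zero.mp h))
    obtain ⟨μ, hμ, hdot⟩ := hL.exists_dot_ne hv
    refine ⟨_, ⟨rgen μ, Submodule.subset_span ⟨μ, hμ, rfl⟩, rfl⟩, ?_⟩
    show gen μ x.val ≠ gen μ y.val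
    simp only [hgen]
    rw [exp_real, exp_real]
    intro h
    have h2 := Complex.ofReal_injective h
    have h3 := Real.exp_injective h2
    apply hdot
    rw [sub_dotProduct]
    linarith
  have htop : SA.topologicalClosure = ⊤ :=
    ContinuousMap.starSubalgebra_topologicalClosure_eq_top_of_separatesPoints SA hsep
  -- main argument
  intro F
  rw [Metric.mem_closure_iff]
  intro ε hε
  obtain ⟨g, hg_near, hg_mem⟩ :=
    (Lp.memLp F).exists_boundedContinuous_eLpNorm_sub_le hp
      (ε := ENNReal.ofReal (ε / 4)) (by simp [hε])
  set V : ℝ := (volume K).toReal ^ (p.toReal⁻¹) with hV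
  have hV0 : 0 ≤ V := Real.rpow_nonneg ENNReal.toReal_nonneg _
  set δ : ℝ := ε / (4 * (V + 1)) with hδ
  have hδ0 : 0 < δ := by positivity
  set gr : C(↥K, ℂ) := ⟨fun z => g z.val, g.continuous.comp continuous_subtype_val⟩ with hgr
  have hgrtop : gr ∈ closure (SA : Set C(↥K, ℂ)) := by
    have : gr ∈ SA.topologicalClosure := by rw [htop]; trivial
    exact this
  rw [Metric.mem_closure_iff] at hgrtop
  obtain ⟨h, hhSA, hdist⟩ := hgrtop δ hδ0
  have hh' : h ∈ Submodule.span ℂ RS := hhSA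
  -- decompose h
  have key : ∀ (h : C(↥K, ℂ)), h ∈ Submodule.span ℂ RS →
      ∃ (y : Lp ℂ p μK) (H : (Fin n → ℝ) → ℂ), y ∈ Submodule.span ℂ S ∧ Continuous H ∧
        ((y : (Fin n → ℝ) → ℂ) =ᵐ[μK] H) ∧ ∀ z : ↥K, H z.val = h z := by
    intro h hh
    induction hh using Submodule.span_induction with
    | mem x hx =>
      obtain ⟨μ, hμ, rfl⟩ := hx
      refine ⟨(memLp_of_continuous hK (gen_cont μ) p).toLp _, gen μ,
        Submodule.subset_span ⟨μ, hμ, MemLp.coeFn_toLp _⟩, gen_cont μ,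
        MemLp.coeFn_toLp _, fun z => rfl⟩
    | zero =>
      exact ⟨0, 0, Submodule.zero_mem _, continuous_const, Lp.coeFn_zero ℂ p μK, fun z => rfl⟩
    | add x y hx hy ihx ihy =>
      obtain ⟨y₁, H₁, hy₁, hH₁, he₁, hv₁⟩ := ihx
      obtain ⟨y₂, H₂, hy₂, hH₂, he₂, hv₂⟩ := ihy
      refine ⟨y₁ + y₂, H₁ + H₂, Submodule.add_mem _ hy₁ hy₂, hH₁.add hH₂, ?_, ?_⟩
      · filter_upwards [Lp.coeFn_add y₁ y₂, he₁, he₂] with t h1 h2 h3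
        simp only [h1, Pi.add_apply, h2, h3]
      · intro z
        simp [hv₁ z, hv₂ z]
    | smul c x hx ih =>
      obtain ⟨y₁, H₁, hy₁, hH₁, he₁, hv₁⟩ := ih
      refine ⟨c • y₁, c • H₁, Submodule.smul_mem _ _ hy₁, hH₁.const_smul c, ?_, ?_⟩
      · filter_upwards [Lp.coeFn_smul c y₁, he₁] with t h1 h2
        simp only [h1, Pi.smul_apply, h2]
      · intro z
        simp [hv₁ z]
  obtain ⟨y, H, hySpan, hHc, hyH, hHh⟩ := key h hh'
  refine ⟨y, hySpan, ?_⟩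
  -- norm estimate
  have hbound : ∀ᵐ t ∂μK, ‖(g : (Fin n → ℝ) → ℂ) t - H t‖ ≤ δ := by
    filter_upwards [ae_restrict_mem hK.isClosed.measurableSet] with t ht
    have : (g : (Fin n → ℝ) → ℂ) t - H t = (gr - h) ⟨t, ht⟩ := by
      simp [hgr, hHh ⟨t, ht⟩]
    rw [this]
    calc ‖(gr - h) ⟨t, ht⟩‖ ≤ ‖gr - h‖ := ContinuousMap.norm_coe_le_norm _ _
      _ ≤ δ := by rw [← dist_eq_norm]; exact le_of_lt hdist
  have e2 : eLpNorm (fun t => (g : (Fin n → ℝ) → ℂ) t - H t) p μK ≤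
      (volume K) ^ (p.toReal⁻¹) * ENNReal.ofReal δ := by
    have := eLpNorm_le_of_ae_bound (μ := μK) (p := p) hbound
    rwa [Measure.restrict_apply_univ] at this
  have e1 : eLpNorm ((F : (Fin n → ℝ) → ℂ) - (y : (Fin n → ℝ) → ℂ)) p μK ≤
      ENNReal.ofReal (ε / 4) + (volume K) ^ (p.toReal⁻¹) * ENNReal.ofReal δ := by
    have hcongr : ((F : (Fin n → ℝ) → ℂ) - (y : (Fin n → ℝ) → ℂ)) =ᵐ[μK]
        (((F : (Fin n → ℝ) → ℂ) - (g : (Fin n → ℝ) → ℂ)) +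
          fun t => (g : (Fin n → ℝ) → ℂ) t - H t) := by
      filter_upwards [hyH] with t ht
      simp only [Pi.sub_apply, Pi.add_apply, ht]
      ring
    rw [eLpNorm_congr_ae hcongr]
    calc eLpNorm _ p μK ≤ eLpNorm ((F : (Fin n → ℝ) → ℂ) - (g : (Fin n → ℝ) → ℂ)) p μK +
          eLpNorm (fun t => (g : (Fin n → ℝ) → ℂ) t - H t) p μK :=
        eLpNorm_add_le ((Lp.aestronglyMeasurable F).sub g.continuous.aestronglyMeasurable)
          (g.continuous.aestronglyMeasurable.sub hHc.aestronglyMeasurable) Fact.out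
      _ ≤ _ := add_le_add hg_near e2
  have hvolK : (volume K) ^ (p.toReal⁻¹) ≠ ⊤ :=
    ENNReal.rpow_ne_top_of_nonneg (by positivity) hK.measure_lt_top.ne
  have hRHS : ENNReal.ofReal (ε / 4) + (volume K) ^ (p.toReal⁻¹) * ENNReal.ofReal δ ≠ ⊤ := by
    exact ENNReal.add_ne_top.mpr ⟨ENNReal.ofReal_ne_top,
      ENNReal.mul_ne_top hvolK ENNReal.ofReal_ne_top⟩
  have hdistFy : dist F y = (eLpNorm ((F : (Fin n → ℝ) → ℂ) - (y : (Fin n → ℝ) → ℂ)) p μK).toReal := by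
    rw [Lp.dist_def]
  rw [hdistFy]
  calc (eLpNorm ((F : (Fin n → ℝ) → ℂ) - (y : (Fin n → ℝ) → ℂ)) p μK).toReal
      ≤ (ENNReal.ofReal (ε / 4) + (volume K) ^ (p.toReal⁻¹) * ENNReal.ofReal δ).toReal :=
        ENNReal.toReal_mono hRHS e1
    _ = ε / 4 + V * δ := by
        rw [ENNReal.toReal_add ENNReal.ofReal_ne_top
          (ENNReal.mul_ne_top hvolK ENNReal.ofReal_ne_top), ENNReal.toReal_mul,
          ENNReal.toReal_ofReal (le_of_lt (by positivity)),
          ENNReal.toReal_ofReal hδ0.le, ← ENNReal.toReal_rpow]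
    _ < ε := by
        have hδε : δ * (4 * (V + 1)) = ε := by
          rw [hδ]; field_simp
        nlinarith [hδ0.le, hV0, hε]

lemma dense_span_weighted {n : ℕ} {K : Set (Fin n → ℝ)} (hK : IsCompact K)
    {p : ℝ≥0∞} [Fact (1 ≤ p)] (hp : p ≠ ⊤) {L : Set (Fin n → ℝ)} (hL : IsLattice n L)
    {c : (Fin n → ℝ) → ℂ} (hc : Continuous c) (hc0 : ∀ x, c x ≠ 0) :
    Dense (↑(Submodule.span ℂ
        {F : Lp ℂ p (volume.restrict K) |
          ∃ μ ∈ L, (F : (Fin n → ℝ) → ℂ) =ᵐ[volume.restrict K]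
            fun x => c x * Complex.exp (2 * ((x ⬝ᵥ μ : ℝ) : ℂ))})
      : Set (Lp ℂ p (volume.restrict K))) := by
  haveI : IsFiniteMeasure (volume.restrict K) :=
    ⟨by simpa [Measure.restrict_apply_univ] using hK.measure_lt_top⟩
  set μK := volume.restrict K with hμK
  set gen : (Fin n → ℝ) → ((Fin n → ℝ) → ℂ) :=
    fun μ x => Complex.exp (2 * ((x ⬝ᵥ μ : ℝ) : ℂ)) with hgen
  set T : Set (Lp ℂ p μK) :=
    {F | ∃ μ ∈ L, (F : (Fin n → ℝ) → ℂ) =ᵐ[μK] fun x => c x * gen μ x} with hT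
  intro F
  rw [Metric.mem_closure_iff]
  intro ε hε
  have hcinv : Continuous fun x => (c x)⁻¹ := hc.inv₀ hc0
  obtain ⟨C₀, hC₀⟩ := hK.exists_bound_of_continuousOn hc.continuousOn
  set C : ℝ := max C₀ 0 with hC
  have hC0 : 0 ≤ C := le_max_right _ _
  set δ : ℝ := ε / (C + 1) with hδ
  have hδ0 : 0 < δ := by positivity
  -- the inverse-weighted function
  set G : (Fin n → ℝ) → ℂ := fun x => (c x)⁻¹ * (F : (Fin n → ℝ) → ℂ) x with hG
  have hGmem : MemLp G p μK :=
    (Lp.memLp F).smul (φ := fun x => (c x)⁻¹) (r := p) (memLp_of_continuous hK hcinv ⊤)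
  have hdense := dense_span_exp hK hp hL (hGmem.toLp G)
  rw [Metric.mem_closure_iff] at hdense
  obtain ⟨y, hySpan, hydist⟩ := hdense δ hδ0
  -- decompose y
  have key : ∀ y : Lp ℂ p μK, y ∈ Submodule.span ℂ
      {F : Lp ℂ p μK | ∃ μ ∈ L, (F : (Fin n → ℝ) → ℂ) =ᵐ[μK] gen μ} →
      ∃ (H : (Fin n → ℝ) → ℂ) (z : Lp ℂ p μK), Continuous H ∧
        ((y : (Fin n → ℝ) → ℂ) =ᵐ[μK] H) ∧ z ∈ Submodule.span ℂ T ∧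
        ((z : (Fin n → ℝ) → ℂ) =ᵐ[μK] fun x => c x * H x) := by
    intro y hy
    induction hy using Submodule.span_induction with
    | mem x hx =>
      obtain ⟨μ, hμ, hxe⟩ := hx
      have hcH : Continuous fun t => c t * gen μ t := hc.mul (gen_cont μ)
      refine ⟨gen μ, (memLp_of_continuous hK hcH p).toLp _, gen_cont μ, hxe,
        Submodule.subset_span ⟨μ, hμ, MemLp.coeFn_toLp _⟩, MemLp.coeFn_toLp _⟩
    | zero =>
      refine ⟨0, 0, continuous_const, Lp.coeFn_zero ℂ p μK, Submodule.zero_mem _, ?_⟩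
      filter_upwards [Lp.coeFn_zero ℂ p μK] with t ht
      rw [ht]
      simp
    | add x y hx hy ihx ihy =>
      obtain ⟨H₁, z₁, hH₁, he₁, hz₁, hze₁⟩ := ihx
      obtain ⟨H₂, z₂, hH₂, he₂, hz₂, hze₂⟩ := ihy
      refine ⟨H₁ + H₂, z₁ + z₂, hH₁.add hH₂, ?_, Submodule.add_mem _ hz₁ hz₂, ?_⟩
      · filter_upwards [Lp.coeFn_add x y, he₁, he₂] with t h1 h2 h3
        simp only [h1, Pi.add_apply, h2, h3]
      · filter_upwards [Lp.coeFn_add z₁ z₂, hze₁, hze₂] with t h1 h2 h3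
        simp only [h1, Pi.add_apply, h2, h3]
        ring
    | smul a x hx ih =>
      obtain ⟨H₁, z₁, hH₁, he₁, hz₁, hze₁⟩ := ih
      refine ⟨a • H₁, a • z₁, hH₁.const_smul a, ?_, Submodule.smul_mem _ _ hz₁, ?_⟩
      · filter_upwards [Lp.coeFn_smul a x, he₁] with t h1 h2
        simp only [h1, Pi.smul_apply, h2]
      · filter_upwards [Lp.coeFn_smul a z₁, hze₁] with t h1 h2
        simp only [h1, Pi.smul_apply, h2, smul_eq_mul]
        ring
  obtain ⟨H, z, hHc, hyH, hzT, hze⟩ := key y hySpan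
  refine ⟨z, hzT, ?_⟩
  -- ‖F - z‖ estimate
  have hGH : eLpNorm (G - H) p μK < ENNReal.ofReal δ := by
    have h1 : dist (hGmem.toLp G) y = (eLpNorm (G - H) p μK).toReal := by
      rw [Lp.dist_def]
      apply congrArg
      apply eLpNorm_congr_ae
      filter_upwards [MemLp.coeFn_toLp hGmem, hyH] with t h2 h3
      simp [h2, h3]
    have h2 : eLpNorm (G - H) p μK ≠ ⊤ := by
      have : MemLp (G - H) p μK := hGmem.sub (memLp_of_continuous hK hHc p)
      exact this.eLpNorm_ne_top
    rw [ENNReal.lt_ofReal_iff_toReal_lt h2, ← h1]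
    exact hydist
  have hFz : eLpNorm ((F : (Fin n → ℝ) → ℂ) - (z : (Fin n → ℝ) → ℂ)) p μK ≤
      ENNReal.ofReal C * ENNReal.ofReal δ := by
    have hcongr : ((F : (Fin n → ℝ) → ℂ) - (z : (Fin n → ℝ) → ℂ)) =ᵐ[μK] c • (G - H) := by
      filter_upwards [hze] with t ht
      simp only [Pi.sub_apply, Pi.smul_apply, Pi.mul_apply, smul_eq_mul, ht, hG]
      rw [mul_sub, ← mul_assoc, mul_inv_cancel₀ (hc0 t), one_mul]
    rw [eLpNorm_congr_ae hcongr]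
    calc eLpNorm (c • (G - H)) p μK ≤ eLpNorm c ⊤ μK * eLpNorm (G - H) p μK :=
        eLpNorm_smul_le_eLpNorm_top_mul_eLpNorm p
          (hGmem.aestronglyMeasurable.sub hHc.aestronglyMeasurable) c
      _ ≤ ENNReal.ofReal C * ENNReal.ofReal δ := by
        refine mul_le_mul' ?_ hGH.le
        have hbd : ∀ᵐ t ∂μK, ‖c t‖ ≤ C := by
          filter_upwards [ae_restrict_mem hK.isClosed.measurableSet] with t ht
          exact le_trans (hC₀ t ht) (le_max_left _ _)
        calc eLpNorm c ⊤ μK ≤ μK Set.univ ^ (⊤ : ℝ≥0∞).toReal⁻¹ * ENNReal.ofReal C :=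
            eLpNorm_le_of_ae_bound hbd
          _ = ENNReal.ofReal C := by simp
  have hdistFz : dist F z = (eLpNorm ((F : (Fin n → ℝ) → ℂ) - (z : (Fin n → ℝ) → ℂ)) p μK).toReal := by
    rw [Lp.dist_def]
  rw [hdistFz]
  calc (eLpNorm ((F : (Fin n → ℝ) → ℂ) - (z : (Fin n → ℝ) → ℂ)) p μK).toReal
      ≤ (ENNReal.ofReal C * ENNReal.ofReal δ).toReal :=
        ENNReal.toReal_mono (ENNReal.mul_ne_top ENNReal.ofReal_ne_top ENNReal.ofReal_ne_top) hFz
    _ = C * δ := by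
        rw [ENNReal.toReal_mul, ENNReal.toReal_ofReal hC0, ENNReal.toReal_ofReal hδ0.le]
    _ < ε := by
        have hδε : δ * (C + 1) = ε := by rw [hδ]; field_simp
        nlinarith [hδ0]

/-- Reduction steps in the proof of the multivariable Zalik theorem (Theorem 5.5):
for Hermitian `A` with invertible real part and any lattice `Λ`, the span of
`x ↦ exp(−x·Ax + 2x·Re(A)λ)` is dense in `Lᵖ(K)`, the span of
`x ↦ exp(2x·Re(A)λ)` is dense in `Lᵖ(K)`, `Re(A)Λ` is again a lattice, and the
span of `x ↦ exp(2x·μ)`, `μ ∈ Re(A)Λ`, is dense in `Lᵖ(K)`. -/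
theorem zalik_reduction_steps
    (n : ℕ) (hn : 1 ≤ n)
    (K : Set (Fin n → ℝ)) (hK : IsCompact K)
    (p : ℝ≥0∞) [Fact (1 ≤ p)] (hp : p ≠ ⊤)
    (Λ : Set (Fin n → ℝ)) (hΛ : IsLattice n Λ)
    (A : Matrix (Fin n) (Fin n) ℂ) (hA : A.IsHermitian)
    (hRe : IsUnit (A.map Complex.re)) :
    Dense (↑(Submodule.span ℂ
        {F : Lp ℂ p (volume.restrict K) |
          ∃ lam ∈ Λ, (F : (Fin n → ℝ) → ℂ) =ᵐ[volume.restrict K]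
            fun x => Complex.exp
              (-((fun i => ((x i : ℝ) : ℂ)) ⬝ᵥ A.mulVec fun i => ((x i : ℝ) : ℂ)) +
                2 * ((x ⬝ᵥ (A.map Complex.re).mulVec lam : ℝ) : ℂ))})
      : Set (Lp ℂ p (volume.restrict K))) ∧
    Dense (↑(Submodule.span ℂ
        {F : Lp ℂ p (volume.restrict K) |
          ∃ lam ∈ Λ, (F : (Fin n → ℝ) → ℂ) =ᵐ[volume.restrict K]
            fun x => Complex.exp
              (2 * ((x ⬝ᵥ (A.map Complex.re).mulVec lam : ℝ) : ℂ))})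
      : Set (Lp ℂ p (volume.restrict K))) ∧
    IsLattice n {μ | ∃ lam ∈ Λ, μ = (A.map Complex.re).mulVec lam} ∧
    Dense (↑(Submodule.span ℂ
        {F : Lp ℂ p (volume.restrict K) |
          ∃ μ ∈ {μ | ∃ lam ∈ Λ, μ = (A.map Complex.re).mulVec lam},
            (F : (Fin n → ℝ) → ℂ) =ᵐ[volume.restrict K]
              fun x => Complex.exp (2 * ((x ⬝ᵥ μ : ℝ) : ℂ))})
      : Set (Lp ℂ p (volume.restrict K))) := by
  set R : Matrix (Fin n) (Fin n) ℝ := A.map Complex.re with hR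
  -- the image lattice
  have hL' : IsLattice n {μ | ∃ lam ∈ Λ, μ = R.mulVec lam} := by
    obtain ⟨M, hM, hΛeq⟩ := hΛ
    refine ⟨R * M, hRe.mul hM, ?_⟩
    ext μ
    constructor
    · rintro ⟨lam, hlam, rfl⟩
      rw [hΛeq] at hlam
      obtain ⟨k, rfl⟩ := hlam
      exact ⟨k, Matrix.mulVec_mulVec _ R M⟩
    · rintro ⟨k, rfl⟩
      refine ⟨M.mulVec fun i => (k i : ℝ), hΛeq ▸ ⟨k, rfl⟩, ?_⟩
      exact (Matrix.mulVec_mulVec _ R M).symm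
  -- fourth statement
  have conj4 := dense_span_exp hK hp hL'
  -- second statement
  have hset24 : {F : Lp ℂ p (volume.restrict K) |
        ∃ lam ∈ Λ, (F : (Fin n → ℝ) → ℂ) =ᵐ[volume.restrict K]
          fun x => Complex.exp (2 * ((x ⬝ᵥ R.mulVec lam : ℝ) : ℂ))} =
      {F : Lp ℂ p (volume.restrict K) |
        ∃ μ ∈ {μ | ∃ lam ∈ Λ, μ = R.mulVec lam},
          (F : (Fin n → ℝ) → ℂ) =ᵐ[volume.restrict K]
            fun x => Complex.exp (2 * ((x ⬝ᵥ μ : ℝ) : ℂ))} := by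
    ext F
    simp only [Set.mem_setOf_eq]
    constructor
    · rintro ⟨lam, hlam, h⟩
      exact ⟨R.mulVec lam, ⟨lam, hlam, rfl⟩, h⟩
    · rintro ⟨μ, ⟨lam, hlam, rfl⟩, h⟩
      exact ⟨lam, hlam, h⟩
  have conj2 : Dense (↑(Submodule.span ℂ
      {F : Lp ℂ p (volume.restrict K) |
        ∃ lam ∈ Λ, (F : (Fin n → ℝ) → ℂ) =ᵐ[volume.restrict K]
          fun x => Complex.exp (2 * ((x ⬝ᵥ R.mulVec lam : ℝ) : ℂ))})
      : Set (Lp ℂ p (volume.restrict K))) := by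
    rw [hset24]; exact conj4
  -- first statement
  have hcast : Continuous fun x : Fin n → ℝ => (fun i => ((x i : ℝ) : ℂ)) :=
    continuous_pi fun i => Complex.continuous_ofReal.comp (continuous_apply i)
  have hQ : Continuous fun v : Fin n → ℂ => v ⬝ᵥ A.mulVec v := by
    unfold dotProduct Matrix.mulVec
    exact continuous_finset_sum _ fun i _ => (continuous_apply i).mul
      (continuous_finset_sum _ fun j _ => continuous_const.mul (continuous_apply j))
  set c : (Fin n → ℝ) → ℂ :=
    fun x => Complex.exp (-((fun i => ((x i : ℝ) : ℂ)) ⬝ᵥ A.mulVec fun i => ((x i : ℝ) : ℂ)))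
    with hc_def
  have hc : Continuous c := Complex.continuous_exp.comp ((hQ.comp hcast).neg)
  have hc0 : ∀ x, c x ≠ 0 := fun x => Complex.exp_ne_zero _
  have conjW := dense_span_weighted hK hp hL' hc hc0
  have hset1 : {F : Lp ℂ p (volume.restrict K) |
        ∃ lam ∈ Λ, (F : (Fin n → ℝ) → ℂ) =ᵐ[volume.restrict K]
          fun x => Complex.exp
            (-((fun i => ((x i : ℝ) : ℂ)) ⬝ᵥ A.mulVec fun i => ((x i : ℝ) : ℂ)) +
              2 * ((x ⬝ᵥ R.mulVec lam : ℝ) : ℂ))} =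
      {F : Lp ℂ p (volume.restrict K) |
        ∃ μ ∈ {μ | ∃ lam ∈ Λ, μ = R.mulVec lam},
          (F : (Fin n → ℝ) → ℂ) =ᵐ[volume.restrict K]
            fun x => c x * Complex.exp (2 * ((x ⬝ᵥ μ : ℝ) : ℂ))} := by
    have hfun : ∀ μ : Fin n → ℝ,
        (fun x : Fin n → ℝ => Complex.exp
          (-((fun i => ((x i : ℝ) : ℂ)) ⬝ᵥ A.mulVec fun i => ((x i : ℝ) : ℂ)) +
            2 * ((x ⬝ᵥ μ : ℝ) : ℂ))) =
        fun x => c x * Complex.exp (2 * ((x ⬝ᵥ μ : ℝ) : ℂ)) :=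
      fun μ => funext fun x => by rw [Complex.exp_add]
    ext F
    simp only [Set.mem_setOf_eq]
    constructor
    · rintro ⟨lam, hlam, h⟩
      refine ⟨R.mulVec lam, ⟨lam, hlam, rfl⟩, ?_⟩
      rw [← hfun (R.mulVec lam)]
      exact h
    · rintro ⟨μ, ⟨lam, hlam, rfl⟩, h⟩
      refine ⟨lam, hlam, ?_⟩
      rw [hfun (R.mulVec lam)]
      exact h
  have conj1 : Dense (↑(Submodule.span ℂ
      {F : Lp ℂ p (volume.restrict K) |
        ∃ lam ∈ Λ, (F : (Fin n → ℝ) → ℂ) =ᵐ[volume.restrict K]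
          fun x => Complex.exp
            (-((fun i => ((x i : ℝ) : ℂ)) ⬝ᵥ A.mulVec fun i => ((x i : ℝ) : ℂ)) +
              2 * ((x ⬝ᵥ R.mulVec lam : ℝ) : ℂ))})
      : Set (Lp ℂ p (volume.restrict K))) := by
    rw [hset1]; exact conjW
  exact ⟨conj1, conj2, hL', conj4⟩
end
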